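/- arXiv:1410.6226 — 3 statements merged into one kernel-verified Lean document; each statement's English description precedes it below -/
import Mathlib

section
/- Let p be a prime and G a finite p-group. If every proper subgroup H of G is nilpotent of class at most 2, then G is nilpotent of class at most 3. -/
/-!
Induct on `|G|`. The hypothesis passes to `G / Z(G)`, so `γ₄(G) ≤ Z(G)`, and it remains to show
`[[u, x], y] = 1` for `u ∈ G'`. Since `G'` lies in the Frattini subgroup and we may assume `G`
is not cyclic, every subgroup `⟨x⟩G'` is proper, hence of class `2`; this gives
`[γ₃, G'] = 1`, and then `(u, x, y) ↦ [[u, x], y]` is multiplicative in each variable with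
central values, and alternating in `(x, y)`. If `⟨x, y⟩G'` is proper we are done; otherwise
`G = ⟨x, y⟩`, the elements `u ∈ G'` with `[[u, x], y] = 1` form a normal subgroup, and it
suffices to treat `u = [x, y]`. For this `u` the Hall–Witt identity makes the form symmetric, so
`w = [[[x, y], x], y]` satisfies `w² = 1`, which settles odd `p`. For `p = 2` the subgroups
`⟨x², y⟩G'`, again proper, give `[[x, y], y]² = [[[x, y], x], y]`; applied to the pairs
`(x, y)`, `(y, x)`, `(x, yx)` this forces `w = 1`.

Mathlib's `lowerCentralSeries n` is `γₙ₊₁`, so `lowerCentralSeries 1 = G'`.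
-/

open Subgroup
open scoped commutatorElement

section

variable {G : Type*} [Group G] {u v m : G}

theorem commutatorElement_mem_lowerCentralSeries_succ {n : ℕ}
    (hu : u ∈ (⊤ : Subgroup G).lowerCentralSeries n) (x : G) :
    ⁅u, x⁆ ∈ (⊤ : Subgroup G).lowerCentralSeries (n + 1) :=
  commutator_mem_commutator hu (mem_top x)

theorem commutatorElement_mem_lowerCentralSeries_one (x y : G) :
    ⁅x, y⁆ ∈ (⊤ : Subgroup G).lowerCentralSeries 1 :=
  commutatorElement_mem_lowerCentralSeries_succ (mem_top x) y

theorem commute_commutatorElement_of_lowerCentralSeries_le_center {n : ℕ}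
    (hZ : (⊤ : Subgroup G).lowerCentralSeries (n + 1) ≤ center G)
    (hm : m ∈ (⊤ : Subgroup G).lowerCentralSeries n) (x y : G) : Commute ⁅m, x⁆ y :=
  ((mem_center_iff.mp (hZ (commutatorElement_mem_lowerCentralSeries_succ hm x))) y).symm

theorem commutatorElement_mul_right_of_mem_lowerCentralSeries {n : ℕ}
    (hZ : (⊤ : Subgroup G).lowerCentralSeries (n + 1) ≤ center G)
    (hm : m ∈ (⊤ : Subgroup G).lowerCentralSeries n) (x y : G) :
    ⁅m, x * y⁆ = ⁅m, x⁆ * ⁅m, y⁆ := by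
  rw [commutatorElement_mul_right_eq_mul_conj, mul_assoc _ x,
    ← (commute_commutatorElement_of_lowerCentralSeries_le_center hZ hm y x).eq,
    ← mul_assoc, mul_inv_cancel_right]

theorem commutatorElement_mul_left_of_mem_lowerCentralSeries {n : ℕ}
    (hZ : (⊤ : Subgroup G).lowerCentralSeries (n + 1) ≤ center G)
    (hm : m ∈ (⊤ : Subgroup G).lowerCentralSeries n) (u x : G) :
    ⁅u * m, x⁆ = ⁅u, x⁆ * ⁅m, x⁆ := by
  have hc := commute_commutatorElement_of_lowerCentralSeries_le_center hZ hm x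
  rw [commutatorElement_mul_left_eq_conj_mul, ← (hc u).eq, mul_inv_cancel_right, (hc _).eq]

theorem commutatorElement_inv_left_of_mem_lowerCentralSeries {n : ℕ}
    (hZ : (⊤ : Subgroup G).lowerCentralSeries (n + 1) ≤ center G)
    (hm : m ∈ (⊤ : Subgroup G).lowerCentralSeries n) (x : G) : ⁅m⁻¹, x⁆ = ⁅m, x⁆⁻¹ :=
  eq_inv_of_mul_eq_one_left <| by
    rw [← commutatorElement_mul_left_of_mem_lowerCentralSeries hZ hm, inv_mul_cancel,
      commutatorElement_one_left]

theorem commutatorElement_conj_right_of_mem_lowerCentralSeries {n : ℕ}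
    (hZ : (⊤ : Subgroup G).lowerCentralSeries (n + 1) ≤ center G)
    (hm : m ∈ (⊤ : Subgroup G).lowerCentralSeries n) (g x : G) :
    ⁅m, g * x * g⁻¹⁆ = ⁅m, x⁆ := by
  have hg : ⁅m, g⁆ * ⁅m, g⁻¹⁆ = 1 := by
    rw [← commutatorElement_mul_right_of_mem_lowerCentralSeries hZ hm, mul_inv_cancel,
      commutatorElement_one_right]
  rw [commutatorElement_mul_right_of_mem_lowerCentralSeries hZ hm,
    commutatorElement_mul_right_of_mem_lowerCentralSeries hZ hm,
    (commute_commutatorElement_of_lowerCentralSeries_le_center hZ hm g _).eq, mul_assoc, hg,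
    mul_one]

theorem commutatorElement_mul_left_of_mem_commutator
    (hC : (⊤ : Subgroup G).lowerCentralSeries 2 ≤
      centralizer ((⊤ : Subgroup G).lowerCentralSeries 1))
    (hu : u ∈ (⊤ : Subgroup G).lowerCentralSeries 1)
    (hv : v ∈ (⊤ : Subgroup G).lowerCentralSeries 1) (x : G) :
    ⁅u * v, x⁆ = ⁅u, x⁆ * ⁅v, x⁆ := by
  have hvx := commutatorElement_mem_lowerCentralSeries_succ hv x
  rw [commutatorElement_mul_left_eq_conj_mul, mem_centralizer_iff.mp (hC hvx) u hu,
    mul_inv_cancel_right,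
    mem_centralizer_iff.mp (hC hvx) _ (commutatorElement_mem_lowerCentralSeries_one u x)]

theorem commutatorElement_inv_left_of_mem_commutator
    (hC : (⊤ : Subgroup G).lowerCentralSeries 2 ≤
      centralizer ((⊤ : Subgroup G).lowerCentralSeries 1))
    (hu : u ∈ (⊤ : Subgroup G).lowerCentralSeries 1) (x : G) : ⁅u⁻¹, x⁆ = ⁅u, x⁆⁻¹ :=
  eq_inv_of_mul_eq_one_left <| by
    rw [← commutatorElement_mul_left_of_mem_commutator hC (inv_mem hu) hu, inv_mul_cancel,
      commutatorElement_one_left]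

theorem commutatorElement_commutatorElement_mul_left
    (hZ : (⊤ : Subgroup G).lowerCentralSeries 3 ≤ center G)
    (hC : (⊤ : Subgroup G).lowerCentralSeries 2 ≤
      centralizer ((⊤ : Subgroup G).lowerCentralSeries 1))
    (hu : u ∈ (⊤ : Subgroup G).lowerCentralSeries 1)
    (hv : v ∈ (⊤ : Subgroup G).lowerCentralSeries 1) (x y : G) :
    ⁅⁅u * v, x⁆, y⁆ = ⁅⁅u, x⁆, y⁆ * ⁅⁅v, x⁆, y⁆ := by
  rw [commutatorElement_mul_left_of_mem_commutator hC hu hv,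
    commutatorElement_mul_left_of_mem_lowerCentralSeries hZ
      (commutatorElement_mem_lowerCentralSeries_succ hv x)]

theorem commutatorElement_commutatorElement_inv_left
    (hZ : (⊤ : Subgroup G).lowerCentralSeries 3 ≤ center G)
    (hC : (⊤ : Subgroup G).lowerCentralSeries 2 ≤
      centralizer ((⊤ : Subgroup G).lowerCentralSeries 1))
    (hu : u ∈ (⊤ : Subgroup G).lowerCentralSeries 1) (x y : G) :
    ⁅⁅u⁻¹, x⁆, y⁆ = ⁅⁅u, x⁆, y⁆⁻¹ := by
  rw [commutatorElement_inv_left_of_mem_commutator hC hu,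
    commutatorElement_inv_left_of_mem_lowerCentralSeries hZ
      (commutatorElement_mem_lowerCentralSeries_succ hu x)]

theorem commutatorElement_commutatorElement_mul_middle
    (hZ : (⊤ : Subgroup G).lowerCentralSeries 3 ≤ center G)
    (hu : u ∈ (⊤ : Subgroup G).lowerCentralSeries 1) (x y t : G) :
    ⁅⁅u, x * y⁆, t⁆ = ⁅⁅u, x⁆, t⁆ * ⁅⁅u, y⁆, t⁆ := by
  have huy := commutatorElement_mem_lowerCentralSeries_succ hu y
  have hw := commutatorElement_mem_lowerCentralSeries_succ huy x
  rw [show ⁅u, x * y⁆ = ⁅u, x⁆ * ⁅⁅u, y⁆, x⁆⁻¹ * ⁅u, y⁆ by group,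
    commutatorElement_mul_left_of_mem_lowerCentralSeries hZ huy,
    commutatorElement_mul_left_of_mem_lowerCentralSeries hZ
      (inv_mem (Subgroup.lowerCentralSeries_antitone ⊤ (by norm_num) hw)),
    (Commute.inv_left (mem_center_iff.mp (hZ hw) t).symm).commutator_eq, mul_one]

theorem commutatorElement_commutatorElement_mul_swap_eq_one
    (hZ : (⊤ : Subgroup G).lowerCentralSeries 3 ≤ center G)
    (hu : u ∈ (⊤ : Subgroup G).lowerCentralSeries 1) (hsq : ∀ x : G, ⁅⁅u, x⁆, x⁆ = 1)
    (x y : G) : ⁅⁅u, x⁆, y⁆ * ⁅⁅u, y⁆, x⁆ = 1 := by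
  have h := hsq (x * y)
  rwa [commutatorElement_commutatorElement_mul_middle hZ hu,
    commutatorElement_mul_right_of_mem_lowerCentralSeries hZ
      (commutatorElement_mem_lowerCentralSeries_succ hu x),
    commutatorElement_mul_right_of_mem_lowerCentralSeries hZ
      (commutatorElement_mem_lowerCentralSeries_succ hu y),
    hsq, hsq, one_mul, mul_one] at h

theorem commutatorElement_commutatorElement_commutatorElement_swap
    (hZ : (⊤ : Subgroup G).lowerCentralSeries 3 ≤ center G)
    (hC : (⊤ : Subgroup G).lowerCentralSeries 2 ≤
      centralizer ((⊤ : Subgroup G).lowerCentralSeries 1)) (a b : G) :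
    ⁅⁅⁅a, b⁆, a⁆, b⁆ = ⁅⁅⁅a, b⁆, b⁆, a⁆ := by
  have hHW := commutatorElement_commutatorElement_conj_mul ⁅a, b⁆ a b
  set c := ⁅a, b⁆
  have hc : c ∈ (⊤ : Subgroup G).lowerCentralSeries 1 :=
    commutatorElement_mem_lowerCentralSeries_one a b
  have hcb := commutatorElement_mem_lowerCentralSeries_succ hc b
  have hbc : ⁅b, c⁆ ∈ (⊤ : Subgroup G).lowerCentralSeries 2 := by
    rw [← commutatorElement_inv]
    exact inv_mem hcb
  have hmid : ⁅c, b * c * b⁻¹⁆ = 1 := by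
    have hcomm : Commute c ⁅b, c⁆ := mem_centralizer_iff.mp (hC hbc) c hc
    rw [show b * c * b⁻¹ = ⁅b, c⁆ * c by group]
    exact (hcomm.mul_right (Commute.refl c)).commutator_eq
  rwa [commutatorElement_conj_right_of_mem_lowerCentralSeries hZ
      (commutatorElement_mem_lowerCentralSeries_succ hc a),
    hmid, mul_one, commutatorElement_conj_right_of_mem_lowerCentralSeries hZ hbc,
    ← commutatorElement_inv c b, commutatorElement_inv_left_of_mem_lowerCentralSeries hZ hcb,
    mul_inv_eq_one] at hHW

theorem sq_commutatorElement_commutatorElement_eq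
    (hZ : (⊤ : Subgroup G).lowerCentralSeries 3 ≤ center G)
    (hC : (⊤ : Subgroup G).lowerCentralSeries 2 ≤
      centralizer ((⊤ : Subgroup G).lowerCentralSeries 1)) {x y : G}
    (h : ⁅⁅x ^ 2, y⁆, y⁆ = 1) : ⁅⁅x, y⁆, y⁆ ^ 2 = ⁅⁅⁅x, y⁆, x⁆, y⁆ := by
  have hd := commutatorElement_mem_lowerCentralSeries_one x y
  have hdx := commutatorElement_mem_lowerCentralSeries_succ hd x
  have hdx' := inv_mem (commutatorElement_mem_lowerCentralSeries_one ⁅x, y⁆ x)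
  rw [show ⁅x ^ 2, y⁆ = ⁅⁅x, y⁆, x⁆⁻¹ * ⁅x, y⁆ * ⁅x, y⁆ by group,
    commutatorElement_mul_left_of_mem_commutator hC (mul_mem hdx' hd) hd,
    commutatorElement_mul_left_of_mem_commutator hC hdx' hd,
    commutatorElement_inv_left_of_mem_lowerCentralSeries hZ hdx, mul_assoc, inv_mul_eq_one] at h
  rw [pow_two, h]

theorem sq_commutatorElement_commutatorElement_commutatorElement_eq_one
    (hZ : (⊤ : Subgroup G).lowerCentralSeries 3 ≤ center G)
    (hC : (⊤ : Subgroup G).lowerCentralSeries 2 ≤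
      centralizer ((⊤ : Subgroup G).lowerCentralSeries 1)) {a b : G}
    (hsq : ∀ x : G, ⁅⁅⁅a, b⁆, x⁆, x⁆ = 1) : ⁅⁅⁅a, b⁆, a⁆, b⁆ ^ 2 = 1 := by
  rw [pow_two]
  nth_rewrite 2 [commutatorElement_commutatorElement_commutatorElement_swap hZ hC]
  exact commutatorElement_commutatorElement_mul_swap_eq_one hZ
    (commutatorElement_mem_lowerCentralSeries_one a b) hsq a b

theorem commutatorElement_commutatorElement_commutatorElement_eq_one_of_sq
    (hZ : (⊤ : Subgroup G).lowerCentralSeries 3 ≤ center G)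
    (hC : (⊤ : Subgroup G).lowerCentralSeries 2 ≤
      centralizer ((⊤ : Subgroup G).lowerCentralSeries 1))
    (hR : ∀ x y : G, ⁅⁅x ^ 2, y⁆, y⁆ = 1) {a b : G} (ha : ⁅⁅⁅a, b⁆, a⁆, a⁆ = 1) :
    ⁅⁅⁅a, b⁆, a⁆, b⁆ = 1 := by
  have hc := commutatorElement_mem_lowerCentralSeries_one a b
  have hca := commutatorElement_mem_lowerCentralSeries_succ hc a
  have hz : ⁅⁅a, b⁆, b⁆ ^ 2 = ⁅⁅⁅a, b⁆, a⁆, b⁆ :=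
    sq_commutatorElement_commutatorElement_eq hZ hC (hR a b)
  have hy : ⁅⁅a, b⁆, a⁆ ^ 2 = ⁅⁅⁅a, b⁆, b⁆, a⁆ := by
    have h := sq_commutatorElement_commutatorElement_eq hZ hC (hR b a)
    rwa [← commutatorElement_inv a b, commutatorElement_inv_left_of_mem_commutator hC hc,
      commutatorElement_commutatorElement_inv_left hZ hC hc, inv_pow, inv_inj] at h
  have hba : ⁅⁅a, b⁆, b * a⁆ ^ 2 = ⁅⁅⁅a, b⁆, a⁆, b⁆ := by
    have h := sq_commutatorElement_commutatorElement_eq hZ hC (hR a (b * a))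
    rwa [show ⁅a, b * a⁆ = ⁅a, b⁆ by group,
      commutatorElement_mul_right_of_mem_lowerCentralSeries hZ hca, ha, mul_one] at h
  have hw := commute_commutatorElement_of_lowerCentralSeries_le_center hZ hca b
  have hzy : Commute ⁅⁅a, b⁆, b⁆ ⁅⁅a, b⁆, a⁆ :=
    mem_centralizer_iff.mp (hC hca) _ (commutatorElement_mem_lowerCentralSeries_one _ b)
  rw [show ⁅⁅a, b⁆, b * a⁆ = ⁅⁅a, b⁆, b⁆ * ⁅⁅⁅a, b⁆, a⁆, b⁆⁻¹ * ⁅⁅a, b⁆, a⁆ by group,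
    mul_assoc, ((hw _).inv_left).eq, ← mul_assoc, ((hw _).inv_left.symm).mul_pow, hzy.mul_pow,
    hz, hy, ← commutatorElement_commutatorElement_commutatorElement_swap hZ hC] at hba
  generalize ⁅⁅⁅a, b⁆, a⁆, b⁆ = w at hba ⊢
  rw [← hba]
  group

theorem commutator_le_of_closure_eq_top {s : Set G} (hs : closure s = ⊤) {N : Subgroup G}
    [N.Normal] (h : ∀ a ∈ s, ∀ b ∈ s, ⁅a, b⁆ ∈ N) : commutator G ≤ N := by
  rw [← Normal.quotient_commutative_iff_commutator_le]
  have hQ : closure (QuotientGroup.mk' N '' s) = ⊤ := by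
    rw [← MonoidHom.map_closure, hs, map_top_of_surjective _ (QuotientGroup.mk'_surjective N)]
  have := isMulCommutative_closure (k := QuotientGroup.mk' N '' s) <| by
    rintro _ ⟨a, ha, rfl⟩ _ ⟨b, hb, rfl⟩
    rw [← commutatorElement_eq_one_iff_mul_comm, ← map_commutatorElement,
      QuotientGroup.mk'_apply, QuotientGroup.eq_one_iff]
    exact h a ha b hb
  exact isMulCommutative_iff.mpr fun x y =>
    setLike_mul_comm (hQ ▸ mem_top x : x ∈ Subgroup.closure _) (hQ ▸ mem_top y)

theorem commutatorElement_commutatorElement_eq_one_of_closure_pair_eq_top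
    (hZ : (⊤ : Subgroup G).lowerCentralSeries 3 ≤ center G)
    (hC : (⊤ : Subgroup G).lowerCentralSeries 2 ≤
      centralizer ((⊤ : Subgroup G).lowerCentralSeries 1))
    {a b : G} (hgen : closure {a, b} = ⊤) (hab : ⁅⁅⁅a, b⁆, a⁆, b⁆ = 1)
    (hu : u ∈ (⊤ : Subgroup G).lowerCentralSeries 1) : ⁅⁅u, a⁆, b⁆ = 1 := by
  let N : Subgroup G :=
    { carrier := {u | u ∈ (⊤ : Subgroup G).lowerCentralSeries 1 ∧ ⁅⁅u, a⁆, b⁆ = 1}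
      mul_mem' := fun ⟨hu, hu'⟩ ⟨hv, hv'⟩ => ⟨mul_mem hu hv, by
        rw [commutatorElement_commutatorElement_mul_left hZ hC hu hv, hu', hv', mul_one]⟩
      one_mem' := ⟨one_mem _, by simp⟩
      inv_mem' := fun ⟨hu, hu'⟩ => ⟨inv_mem hu, by
        rw [commutatorElement_commutatorElement_inv_left hZ hC hu, hu', inv_one]⟩ }
  have : N.Normal := ⟨fun v ⟨hv, hv'⟩ g => by
    have hgv : ⁅g, v⁆ ∈ (⊤ : Subgroup G).lowerCentralSeries 2 := by
      rw [← commutatorElement_inv]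
      exact inv_mem (commutatorElement_mem_lowerCentralSeries_succ hv g)
    refine ⟨(lowerCentralSeries_normal ⊤ 1).conj_mem v hv g, ?_⟩
    rw [show g * v * g⁻¹ = ⁅g, v⁆ * v by group,
      commutatorElement_commutatorElement_mul_left hZ hC
        (commutatorElement_mem_lowerCentralSeries_one g v) hv,
      (commute_commutatorElement_of_lowerCentralSeries_le_center hZ hgv a b).commutator_eq, hv',
      one_mul]⟩
  refine (commutator_le_of_closure_eq_top hgen (N := N) ?_ hu).2
  simp only [Set.mem_insert_iff, Set.mem_singleton_iff]
  rintro x (rfl | rfl) y (rfl | rfl)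
  · simp
  · exact ⟨commutatorElement_mem_lowerCentralSeries_one x y, hab⟩
  · rw [← commutatorElement_inv]
    exact N.inv_mem ⟨commutatorElement_mem_lowerCentralSeries_one y x, hab⟩
  · simp

theorem commutator_le_frattini [Group.IsNilpotent G] : commutator G ≤ frattini G := by
  refine le_iInf₂ fun M (hM : IsCoatom M) => ?_
  have := Group.normalizerCondition_of_isNilpotent.normal_of_coatom M hM
  obtain ⟨x, hx⟩ : ∃ x, x ∉ M := by
    by_contra! hall
    exact hM.1 (eq_top_iff' M |>.mpr hall)
  refine Normal.commutator_le_of_self_sup_commutative_eq_top (H := zpowers x)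
    (hM.lt_iff.mp (lt_of_le_of_ne le_sup_left fun hMx => hx ?_)) inferInstance
  exact hMx ▸ mem_sup_right (mem_zpowers x)

theorem eq_top_of_sup_commutator_eq_top [Group.IsNilpotent G] [IsCoatomic (Subgroup G)]
    {K : Subgroup G} (h : K ⊔ commutator G = ⊤) : K = ⊤ :=
  frattini_nongenerating (top_le_iff.mp (h ▸ sup_le_sup_left commutator_le_frattini K))

theorem zpowers_sup_commutator_ne_top [Group.IsNilpotent G] [IsCoatomic (Subgroup G)]
    (hcyc : ¬IsCyclic G) (x : G) : zpowers x ⊔ commutator G ≠ ⊤ := fun h =>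
  hcyc (isCyclic_iff_exists_zpowers_eq_top.mpr ⟨x, eq_top_of_sup_commutator_eq_top h⟩)

theorem IsPGroup.eq_top_of_sup_zpowers_pow_eq_top {p : ℕ} [hp : Fact p.Prime]
    (hG : IsPGroup p G) {N : Subgroup G} [N.Normal] {x : G}
    (h : N ⊔ zpowers (x ^ p) = ⊤) : N = ⊤ := by
  suffices hx : x ∈ N by
    rw [eq_top_iff, ← h]
    exact sup_le le_rfl (zpowers_le.mpr (pow_mem hx p))
  have hgen : QuotientGroup.mk' N x ∈ zpowers (QuotientGroup.mk' N x ^ p) := by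
    have := congrArg (Subgroup.map (QuotientGroup.mk' N)) h
    rw [Subgroup.map_sup, map_top_of_surjective _ (QuotientGroup.mk'_surjective N),
      MonoidHom.map_zpowers, (Subgroup.map_eq_bot_iff _).mpr (QuotientGroup.ker_mk' N).ge,
      bot_sup_eq, map_pow] at this
    rw [this]
    exact mem_top _
  by_contra hxN
  have hne : QuotientGroup.mk' N x ≠ 1 := by
    rwa [Ne, QuotientGroup.mk'_apply, QuotientGroup.eq_one_iff]
  have hdvd := Nat.dvd_gcd (dvd_refl p) ((hG.to_quotient N).dvd_orderOf hne)
  rw [mem_zpowers_pow_iff.mp hgen] at hdvd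
  exact hp.out.not_dvd_one hdvd

theorem IsPGroup.zpowers_sup_zpowers_pow_sup_commutator_ne_top [Finite G] {p : ℕ}
    [Fact p.Prime] (hG : IsPGroup p G) (hcyc : ¬IsCyclic G) (x y : G) :
    zpowers y ⊔ zpowers (x ^ p) ⊔ commutator G ≠ ⊤ := by
  have := hG.isNilpotent
  have : (zpowers y ⊔ commutator G).Normal := Normal.of_commutator_le G le_sup_right
  intro h
  refine zpowers_sup_commutator_ne_top hcyc y (hG.eq_top_of_sup_zpowers_pow_eq_top (x := x) ?_)
  rw [← h, sup_right_comm]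

def ProperSubgroupsHaveClassLE (G : Type*) [Group G] (n : ℕ) : Prop :=
  ∀ H : Subgroup G, H ≠ ⊤ → H.lowerCentralSeries n = ⊥

theorem ProperSubgroupsHaveClassLE.of_surjective {Q : Type*} [Group Q] {f : G →* Q}
    (hf : Function.Surjective f) {n : ℕ} (h : ProperSubgroupsHaveClassLE G n) :
    ProperSubgroupsHaveClassLE Q n := by
  intro K hK
  have hK' : K.comap f ≠ ⊤ := fun htop => hK <| by
    rw [← map_comap_eq_self_of_surjective hf K, htop, map_top_of_surjective f hf]
  rw [← map_comap_eq_self_of_surjective hf K, ← map_lowerCentralSeries, h _ hK',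
    Subgroup.map_bot]

theorem ProperSubgroupsHaveClassLE.commutatorElement_commutatorElement_eq_one
    (h : ProperSubgroupsHaveClassLE G 2) {H : Subgroup G} (hH : H ≠ ⊤) {a b d : G}
    (ha : a ∈ H) (hb : b ∈ H) (hd : d ∈ H) : ⁅⁅a, b⁆, d⁆ = 1 := by
  rw [← mem_bot, ← h H hH]
  exact commutator_mem_commutator (commutator_mem_commutator ha hb) hd

theorem ProperSubgroupsHaveClassLE.lowerCentralSeries_two_le_centralizer
    (h : ProperSubgroupsHaveClassLE G 2) (hK : ∀ x : G, zpowers x ⊔ commutator G ≠ ⊤) :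
    (⊤ : Subgroup G).lowerCentralSeries 2 ≤
      centralizer ((⊤ : Subgroup G).lowerCentralSeries 1) := by
  rw [Subgroup.lowerCentralSeries_succ, commutator_le]
  intro v hv x _
  rw [mem_centralizer_iff]
  intro u hu
  exact (commutatorElement_eq_one_iff_mul_comm.mp (h.commutatorElement_commutatorElement_eq_one
    (hK x) (mem_sup_right hv) (mem_sup_left (mem_zpowers x)) (mem_sup_right hu))).symm

theorem IsPGroup.commutatorElement_commutatorElement_commutatorElement_eq_one [Finite G]
    {p : ℕ} [hp : Fact p.Prime] (hG : IsPGroup p G) (h : ProperSubgroupsHaveClassLE G 2)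
    (hcyc : ¬IsCyclic G) (hZ : (⊤ : Subgroup G).lowerCentralSeries 3 ≤ center G) (a b : G) :
    ⁅⁅⁅a, b⁆, a⁆, b⁆ = 1 := by
  have := hG.isNilpotent
  have hsq (x : G) : ⁅⁅⁅a, b⁆, x⁆, x⁆ = 1 :=
    h.commutatorElement_commutatorElement_eq_one (zpowers_sup_commutator_ne_top hcyc x)
      (mem_sup_right (commutatorElement_mem_lowerCentralSeries_one a b))
      (mem_sup_left (mem_zpowers x)) (mem_sup_left (mem_zpowers x))
  have hC := h.lowerCentralSeries_two_le_centralizer (zpowers_sup_commutator_ne_top hcyc)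
  rcases hp.out.eq_two_or_odd' with rfl | hodd
  · refine commutatorElement_commutatorElement_commutatorElement_eq_one_of_sq hZ hC
      (fun x y => ?_) (hsq a)
    exact h.commutatorElement_commutatorElement_eq_one
      (hG.zpowers_sup_zpowers_pow_sup_commutator_ne_top hcyc x y)
      (mem_sup_left (mem_sup_right (mem_zpowers _)))
      (mem_sup_left (mem_sup_left (mem_zpowers y))) (mem_sup_left (mem_sup_left (mem_zpowers y)))
  · apply (hG.powEquiv (Nat.coprime_two_right.mpr hodd)).injective
    rw [hG.powEquiv_apply, hG.powEquiv_apply, one_pow,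
      sq_commutatorElement_commutatorElement_commutatorElement_eq_one hZ hC hsq]

theorem IsPGroup.lowerCentralSeries_two_le_center [Finite G] {p : ℕ} [Fact p.Prime]
    (hG : IsPGroup p G) (h : ProperSubgroupsHaveClassLE G 2)
    (hZ : (⊤ : Subgroup G).lowerCentralSeries 3 ≤ center G) :
    (⊤ : Subgroup G).lowerCentralSeries 2 ≤ center G := by
  by_cases hcyc : IsCyclic G
  · rw [Subgroup.lowerCentralSeries_succ, top_lowerCentralSeries_one, commutator_eq_bot,
      commutator_bot_left]
    exact bot_le
  have := hG.isNilpotent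
  rw [Subgroup.lowerCentralSeries_succ, commutator_le]
  intro u hu x _
  rw [mem_center_iff]
  intro y
  refine (commutatorElement_eq_one_iff_mul_comm.mp ?_).symm
  by_cases hxy : closure {x, y} ⊔ commutator G = ⊤
  · exact commutatorElement_commutatorElement_eq_one_of_closure_pair_eq_top hZ
      (h.lowerCentralSeries_two_le_centralizer (zpowers_sup_commutator_ne_top hcyc))
      (eq_top_of_sup_commutator_eq_top hxy)
      (hG.commutatorElement_commutatorElement_commutatorElement_eq_one h hcyc hZ x y) hu
  · exact h.commutatorElement_commutatorElement_eq_one hxy (mem_sup_right hu)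
      (mem_sup_left (subset_closure (by simp))) (mem_sup_left (subset_closure (by simp)))

theorem IsPGroup.lowerCentralSeries_three_eq_bot [Finite G] {p : ℕ} [Fact p.Prime]
    (hG : IsPGroup p G) (h : ProperSubgroupsHaveClassLE G 2) :
    (⊤ : Subgroup G).lowerCentralSeries 3 = ⊥ := by
  induction hn : Nat.card G using Nat.strong_induction_on generalizing G with
  | _ n ih =>
  rcases subsingleton_or_nontrivial G with hG1 | hG1
  · exact Subsingleton.elim _ _
  have hZ : (⊤ : Subgroup G).lowerCentralSeries 3 ≤ center G := by
    have hcard : (center G).index < n := by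
      have := hG.center_nontrivial
      rw [← hn, ← (center G).index_mul_card]
      exact lt_mul_of_one_lt_right (Nat.pos_of_ne_zero (center G).index_ne_zero_of_finite)
        Finite.one_lt_card
    have hQ := ih _ hcard (hG.to_quotient (center G))
      (h.of_surjective (QuotientGroup.mk'_surjective _)) rfl
    rwa [← QuotientGroup.ker_mk' (center G), ← Subgroup.map_eq_bot_iff, map_lowerCentralSeries,
      map_top_of_surjective _ (QuotientGroup.mk'_surjective _)]
  exact Subgroup.lowerCentralSeries_succ_eq_bot _ (hG.lowerCentralSeries_two_le_center h hZ)

end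

/-- If every proper subgroup of a finite `p`-group `G` is nilpotent of class
at most `2`, then `G` is nilpotent of class at most `3`. -/
theorem class_le_three_of_proper_class_le_two (p : ℕ) (hp : p.Prime) (G : Type*) [Group G]
    [Finite G] (hG : IsPGroup p G)
    (h : ∀ H : Subgroup G, H ≠ ⊤ → (⊤ : Subgroup H).lowerCentralSeries 2 = ⊥) :
    (⊤ : Subgroup G).lowerCentralSeries 3 = ⊥ := by
  have := Fact.mk hp
  refine hG.lowerCentralSeries_three_eq_bot fun H hH => ?_
  rw [← top_subtype_lowerCentralSeries, h H hH, Subgroup.map_bot]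
end

section
/- Let p be a prime, t ≥ 1, and let G be a finite non-abelian p-group that has an abelian subgroup of index p and in which every non-abelian subgroup can be generated by two elements. Then G is an A_t-group if and only if the nilpotency class of G equals t + 1. -/
/-!
Fix an abelian normal subgroup `A` of index `p` and some `y ∉ A`. On `A` the map `u ↦ ⁅u, y⁆` is
an endomorphism, and the kernels `commKer A y j` of its iterates control lower central series:
if `H ⊄ A` and `H ⊓ A ≤ commKer A y n`, then `H.lowerCentralSeries n = ⊥`.

A non-abelian subgroup `H` of index `p ^ (s + 1)` is maximal in a non-abelian subgroup `M` of
index `p ^ s`, so `M = ⟨x, y⟩` with `x ∈ A`, `y ∉ A`. Writing the elements of `M` as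
`x ^ E * y ^ k * d` with `d ∈ ⁅M, M⁆` shows that the class drops when passing from `M` to `H`;
by induction a non-abelian subgroup of index `p ^ s` forces class at least `s + 2`.

Conversely, if `G` has class `c + 2`, the kernels `commKer A y j` increase strictly up to `A`, so
`|A| ≥ p ^ (c + 1) * |C_A(y)|`. Choosing `x ∈ A` such that `⁅x, y⁆` has order `p` and commutes
with `y`, the non-abelian subgroup `⟨x, y⟩` has order at most `p ^ 2 * |C_A(y)|`, so its index
is divisible by `p ^ c`.
-/

/-- A finite `p`-group `G` is an `A_t`-group if every subgroup of index `p^t` is abelian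
and at least one subgroup of index `p^(t-1)` is non-abelian. -/
def IsAtGroup (p t : ℕ) (G : Type*) [Group G] : Prop :=
  (∀ H : Subgroup G, H.index = p ^ t → ∀ x ∈ H, ∀ y ∈ H, x * y = y * x) ∧
  ∃ H : Subgroup G, H.index = p ^ (t - 1) ∧ ¬ ∀ x ∈ H, ∀ y ∈ H, x * y = y * x

open Subgroup
open scoped commutatorElement

section General

variable {G : Type*} [Group G]

theorem Subgroup.mem_of_pow_prime_mem_of_zpow_mem {p : ℕ} (hp : p.Prime) {L : Subgroup G}
    {g : G} (hgp : g ^ p ∈ L) {k : ℤ} (hgk : g ^ k ∈ L) (hk : ¬ (p : ℤ) ∣ k) : g ∈ L := by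
  obtain ⟨a, b, hab⟩ := (Nat.prime_iff_prime_int.mp hp).coprime_iff_not_dvd.mpr hk
  have hg : g = (g ^ (p : ℤ)) ^ a * (g ^ k) ^ b := by
    rw [← zpow_mul, ← zpow_mul, ← zpow_add, mul_comm _ a, mul_comm _ b, hab, zpow_one]
  rw [hg]
  exact mul_mem (zpow_mem (by rwa [zpow_natCast]) a) (zpow_mem hgk b)

theorem Subgroup.mem_normalizer_closure_of_conj_mem {S : Set G} {w : G}
    (h₁ : ∀ s ∈ S, w * s * w⁻¹ ∈ closure S) (h₂ : ∀ s ∈ S, w⁻¹ * s * w ∈ closure S) :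
    w ∈ normalizer (closure S) := by
  have conj_le : ∀ v : G, (∀ s ∈ S, v * s * v⁻¹ ∈ closure S) →
      ∀ u ∈ closure S, v * u * v⁻¹ ∈ closure S := fun v hv =>
    (closure_le ((closure S).comap (MulAut.conj v).toMonoidHom)).mpr hv
  refine mem_normalizer_iff.mpr fun u => ⟨conj_le w h₁ u, fun hu => ?_⟩
  simpa [mul_assoc] using conj_le w⁻¹ (by simpa using h₂) _ hu

theorem Subgroup.exists_eq_mul_zpow_of_mem_closure_insert {S : Set G} {w : G}
    (hw : w ∈ normalizer (closure S)) {u : G} (hu : u ∈ closure (insert w S)) :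
    ∃ v ∈ closure S, ∃ k : ℤ, u = v * w ^ k := by
  rw [Set.insert_eq, closure_union, ← zpowers_eq_closure, sup_comm, ← SetLike.mem_coe,
    coe_mul_of_right_le_normalizer_left _ _ ((zpowers_le).mpr hw)] at hu
  obtain ⟨v, hv, _, ⟨k, rfl⟩, rfl⟩ := hu
  exact ⟨v, hv, k, rfl⟩

theorem Subgroup.exists_eq_zpow_mul_zpow_mul_of_mem_closure_pair {x y m : G}
    (hm : m ∈ closure {x, y}) :
    ∃ E k : ℤ, ∃ d ∈ (closure {x, y}).lowerCentralSeries 1, m = x ^ E * y ^ k * d := by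
  set M := closure ({x, y} : Set G)
  let x' : M := ⟨x, subset_closure (by simp)⟩
  let y' : M := ⟨y, subset_closure (by simp)⟩
  have hgen : closure {x', y'} = ⊤ := by
    refine eq_top_iff.mpr (closure_closure_coe_preimage.symm.le.trans (closure_mono ?_))
    rintro ⟨z, hz⟩ (rfl | rfl : z = x ∨ z = y) <;> simp [x', y']
  have hm' := mem_map_of_mem Abelianization.of (hgen ▸ mem_top (⟨m, hm⟩ : M))
  rw [MonoidHom.map_closure, Set.image_pair] at hm'
  obtain ⟨E, k, hEk⟩ := mem_closure_pair.mp hm'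
  have hd : (x' ^ E * y' ^ k)⁻¹ * ⟨m, hm⟩ ∈ (⊤ : Subgroup M).lowerCentralSeries 1 := by
    rw [top_lowerCentralSeries_one, ← Abelianization.ker_of, MonoidHom.mem_ker, map_mul, map_inv,
      map_mul, map_zpow, map_zpow, hEk, inv_mul_cancel]
  refine ⟨E, k, _, top_subtype_lowerCentralSeries M 1 ▸ mem_map_of_mem M.subtype hd, ?_⟩
  simp [x', y', mul_assoc]

theorem Subgroup.card_sup_zpowers_le [Finite G] {S : Subgroup G} {x : G}
    (hx : x ∈ normalizer S) {n : ℕ} (hn : 0 < n) (hxn : x ^ n ∈ S) :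
    Nat.card (S ⊔ zpowers x : Subgroup G) ≤ n * Nat.card S := by
  have hsurj : Function.Surjective fun is : Fin n × S =>
      (⟨is.2 * x ^ (is.1 : ℕ), mul_mem (mem_sup_left is.2.2)
        (mem_sup_right (npow_mem_zpowers x _))⟩ : (S ⊔ zpowers x : Subgroup G)) := by
    rintro ⟨u, hu⟩
    rw [← SetLike.mem_coe, coe_mul_of_right_le_normalizer_left _ _ ((zpowers_le).mpr hx)] at hu
    obtain ⟨s, hs, _, ⟨k, rfl⟩, rfl⟩ := hu
    have hr : ((k % n).toNat : ℤ) = k % n := Int.toNat_of_nonneg (Int.emod_nonneg k (by omega))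
    have hlt : k % n < n := Int.emod_lt_of_pos k (by omega)
    refine ⟨(⟨(k % n).toNat, by omega⟩, ⟨s * (x ^ n) ^ (k / n), mul_mem hs (zpow_mem hxn _)⟩), ?_⟩
    ext
    simp only
    rw [← zpow_natCast x (k % n).toNat, hr, ← zpow_natCast, ← zpow_mul, mul_assoc, ← zpow_add,
      Int.mul_ediv_add_emod]
  calc Nat.card (S ⊔ zpowers x : Subgroup G) ≤ Nat.card (Fin n × S) :=
        Nat.card_le_card_of_surjective _ hsurj
    _ = n * Nat.card S := by rw [Nat.card_prod, Nat.card_fin]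

end General

section IndexPrime

variable {G : Type*} [Group G] {A : Subgroup G} [A.Normal] {p : ℕ} [hp : Fact p.Prime]

theorem Subgroup.commutator_mem_of_index_eq_prime (hAp : A.index = p) (g h : G) : ⁅g, h⁆ ∈ A := by
  have : IsCyclic (G ⧸ A) := isCyclic_of_prime_card hAp
  let _ := IsCyclic.commGroup (α := G ⧸ A)
  simpa using Abelianization.commutator_subset_ker (QuotientGroup.mk' A)
    (commutator_mem_commutator (mem_top g) (mem_top h))

theorem Subgroup.commutator_le_of_index_eq_prime (hAp : A.index = p) (H K : Subgroup G) :
    ⁅H, K⁆ ≤ A :=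
  commutator_le.mpr fun g _ h _ => commutator_mem_of_index_eq_prime hAp g h

theorem Subgroup.orderOf_mk_of_index_eq_prime (hAp : A.index = p) {w : G} (hw : w ∉ A) :
    orderOf (w : G ⧸ A) = p := by
  have hcard : Nat.card (G ⧸ A) = p := hAp
  have : Finite (G ⧸ A) := Nat.finite_of_card_ne_zero (hcard ▸ hp.out.ne_zero)
  refine orderOf_eq_prime (hcard ▸ pow_card_eq_one') ?_
  rwa [ne_eq, QuotientGroup.eq_one_iff]

theorem Subgroup.dvd_of_zpow_mem_of_index_eq_prime (hAp : A.index = p) {w : G} (hw : w ∉ A)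
    {k : ℤ} (hk : w ^ k ∈ A) : (p : ℤ) ∣ k := by
  rwa [← orderOf_mk_of_index_eq_prime hAp hw, orderOf_dvd_iff_zpow_eq_one, ← QuotientGroup.mk_zpow,
    QuotientGroup.eq_one_iff]

theorem Subgroup.exists_mem_mul_pow_of_index_eq_prime (hAp : A.index = p) {w : G} (hw : w ∉ A)
    (z : G) : ∃ a ∈ A, ∃ m : ℕ, z = a * w ^ m := by
  have hcard : Nat.card (G ⧸ A) = p := hAp
  have : Finite (G ⧸ A) := Nat.finite_of_card_ne_zero (hcard ▸ hp.out.ne_zero)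
  have htop : zpowers (w : G ⧸ A) = ⊤ :=
    eq_top_of_card_eq _ (by rw [Nat.card_zpowers, orderOf_mk_of_index_eq_prime hAp hw, hcard])
  obtain ⟨m, hm : (w : G ⧸ A) ^ m = z⟩ :=
    mem_powers_iff_mem_zpowers.mpr (htop ▸ mem_top (z : G ⧸ A))
  refine ⟨z * (w ^ m)⁻¹, ?_, m, by group⟩
  rw [← QuotientGroup.eq_one_iff, QuotientGroup.mk_mul, QuotientGroup.mk_inv, QuotientGroup.mk_pow,
    hm, mul_inv_cancel]

end IndexPrime

section PGroup

variable {G : Type*} [Group G] [Finite G] {p : ℕ} [hp : Fact p.Prime]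

theorem IsPGroup.normal_of_index_eq_prime (hG : IsPGroup p G) {J : Subgroup G}
    (hJ : J.index = p) : J.Normal := by
  obtain ⟨n, hn⟩ := hG.exists_card_eq
  have hn0 : n ≠ 0 := by
    rintro rfl
    have := J.index_dvd_card
    rw [hJ, hn, pow_zero, Nat.dvd_one] at this
    exact hp.out.one_lt.ne' this
  exact normal_of_index_eq_minFac_card (by rw [hn, hp.out.pow_minFac hn0, hJ])

theorem IsPGroup.exists_le_index_eq_pow (hG : IsPGroup p G) {K : Subgroup G} {m : ℕ}
    (hm : p ^ m ∣ K.index) : ∃ L, K ≤ L ∧ L.index = p ^ m := by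
  obtain ⟨N, hN⟩ := hG.exists_card_eq
  obtain ⟨k, hk⟩ := (hG.to_subgroup K).exists_card_eq
  obtain ⟨e, he⟩ := hG.index K
  have hkeN : p ^ (k + e) = p ^ N := by rw [pow_add, ← hk, ← he, K.card_mul_index, hN]
  have hkeN := Nat.pow_right_injective hp.out.two_le hkeN
  have hme : m ≤ e := (Nat.pow_dvd_pow_iff_le_right hp.out.one_lt).mp (he ▸ hm)
  obtain ⟨L, hL, hKL⟩ := Sylow.exists_subgroup_card_pow_prime_le p (m := N - m)
    (hN ▸ pow_dvd_pow p (N.sub_le m)) K hk (by omega)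
  refine ⟨L, hKL, Nat.eq_of_mul_eq_mul_left (pow_pos hp.out.pos (N - m)) ?_⟩
  rw [← pow_add, Nat.sub_add_cancel (by omega), ← hN, ← L.card_mul_index, hL]

theorem IsPGroup.prime_mul_card_le_of_lt (hG : IsPGroup p G) {J₁ J₂ : Subgroup G}
    (hJ : J₁ < J₂) : p * Nat.card J₁ ≤ Nat.card J₂ := by
  obtain ⟨a, ha⟩ := (hG.to_subgroup J₁).exists_card_eq
  obtain ⟨b, hb⟩ := (hG.to_subgroup J₂).exists_card_eq
  have hab : a < b := by
    refine (Nat.pow_lt_pow_iff_right hp.out.one_lt).mp ?_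
    rw [← ha, ← hb]
    exact Set.Finite.card_lt_card (Set.toFinite _) (SetLike.coe_ssubset_coe.mpr hJ)
  rw [ha, hb, ← pow_succ']
  exact Nat.pow_le_pow_right hp.out.pos hab

theorem IsPGroup.prime_pow_dvd_index_of_mul_card_le (hG : IsPGroup p G) {K : Subgroup G} {c : ℕ}
    (h : p ^ c * Nat.card K ≤ Nat.card G) : p ^ c ∣ K.index := by
  obtain ⟨e, he⟩ := hG.index K
  rw [← K.card_mul_index, he, mul_comm] at h
  rw [he]
  exact pow_dvd_pow p ((Nat.pow_le_pow_iff_right hp.out.one_lt).mp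
    (Nat.le_of_mul_le_mul_left h Nat.card_pos))

theorem IsPGroup.pow_mem_of_relIndex_eq_prime (hG : IsPGroup p G) {H M : Subgroup G} (hHM : H.relIndex M = p)
    {m : G} (hm : m ∈ M) : m ^ p ∈ H := by
  have := (hG.to_subgroup M).normal_of_index_eq_prime hHM
  have h := (H.subgroupOf M).pow_index_mem ⟨m, hm⟩
  rw [← relIndex, hHM, mem_subgroupOf] at h
  simpa using h

theorem IsPGroup.commutator_le_of_relIndex_eq_prime (hG : IsPGroup p G) {H M : Subgroup G}
    (hHM : H.relIndex M = p) :
    ⁅M, M⁆ ≤ H := by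
  have := (hG.to_subgroup M).normal_of_index_eq_prime hHM
  refine commutator_le.mpr fun g hg h hh => ?_
  have h := commutator_mem_of_index_eq_prime hHM ⟨g, hg⟩ ⟨h, hh⟩
  rwa [mem_subgroupOf] at h

end PGroup

def commWith {G : Type*} [Group G] (y u : G) : G := ⁅u, y⁆

section CommWith

variable {G : Type*} [Group G]

theorem commWith_one (y : G) : commWith y 1 = 1 := commutatorElement_one_left y

theorem iterate_commWith_one (y : G) (n : ℕ) : (commWith y)^[n] 1 = 1 :=
  Function.iterate_fixed (commWith_one y) n

theorem iterate_commWith_conj (y z : G) (n : ℕ) :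
    (commWith y)^[n] (y * z * y⁻¹) = y * (commWith y)^[n] z * y⁻¹ := by
  induction n generalizing z with
  | zero => rfl
  | succ n ih =>
    rw [Function.iterate_succ_apply, Function.iterate_succ_apply, ← ih]
    congr 1
    simp only [commWith, commutatorElement_def]
    group

theorem iterate_commWith_mem_lowerCentralSeries {M : Subgroup G} {y u : G} (hy : y ∈ M) {j : ℕ}
    (hu : u ∈ M.lowerCentralSeries j) (k : ℕ) :
    (commWith y)^[k] u ∈ M.lowerCentralSeries (j + k) := by
  induction k with
  | zero => exact hu
  | succ k ih =>
    rw [Function.iterate_succ_apply']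
    exact commutator_mem_commutator ih hy

theorem iterate_commWith_eq_one_of_lowerCentralSeries_eq_bot {M : Subgroup G} {y u : G}
    (hy : y ∈ M) {j k : ℕ} (hu : u ∈ M.lowerCentralSeries j)
    (hM : M.lowerCentralSeries (j + k) = ⊥) : (commWith y)^[k] u = 1 := by
  have h := iterate_commWith_mem_lowerCentralSeries hy hu k
  rwa [hM, mem_bot] at h

theorem mem_normalizer_closure_commWith {x y : G} (hx : commWith y (commWith y x) = 1) :
    y ∈ normalizer (closure {x, commWith y x}) := by
  set g := commWith y x
  have hgy : g * y = y * g := commutatorElement_eq_one_iff_mul_comm.mp hx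
  have hxN : x ∈ closure {x, g} := subset_closure (by simp)
  have hgN : g ∈ closure {x, g} := subset_closure (by simp)
  refine mem_normalizer_closure_of_conj_mem ?_ ?_ <;>
    simp only [Set.mem_insert_iff, Set.mem_singleton_iff, forall_eq_or_imp, forall_eq]
  · rw [show y * x * y⁻¹ = g⁻¹ * x by simp only [g, commWith, commutatorElement_def]; group,
      show y * g * y⁻¹ = g by rw [← hgy]; group]
    exact ⟨mul_mem (inv_mem hgN) hxN, hgN⟩
  · rw [show y⁻¹ * x * y = y⁻¹ * (g * y) * x by
        simp only [g, commWith, commutatorElement_def]; group,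
      show y⁻¹ * g * y = g by rw [mul_assoc, hgy]; group, hgy]
    exact ⟨by simpa using mul_mem hgN hxN, hgN⟩

variable {A : Subgroup G} [A.Normal]

theorem commWith_mem (y : G) {u : G} (hu : u ∈ A) : commWith y u ∈ A := by
  rw [commWith, commutatorElement_def, mul_assoc, mul_assoc, ← mul_assoc y]
  exact mul_mem hu (Normal.conj_mem ‹_› _ (inv_mem hu) y)

theorem iterate_commWith_mem (y : G) (n : ℕ) {u : G} (hu : u ∈ A) : (commWith y)^[n] u ∈ A := by
  induction n with
  | zero => exact hu
  | succ n ih => rw [Function.iterate_succ_apply']; exact commWith_mem y ih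

variable [IsMulCommutative A]

theorem commWith_mul (y : G) {u v : G} (hu : u ∈ A) (hv : v ∈ A) :
    commWith y (u * v) = commWith y u * commWith y v := by
  have hsw : commWith y v * (y * u⁻¹ * y⁻¹) = (y * u⁻¹ * y⁻¹) * commWith y v :=
    setLike_mul_comm (commWith_mem y hv) (Normal.conj_mem ‹_› _ (inv_mem hu) y)
  calc commWith y (u * v) = u * (commWith y v * (y * u⁻¹ * y⁻¹)) := by
        simp only [commWith, commutatorElement_def]; group
    _ = u * ((y * u⁻¹ * y⁻¹) * commWith y v) := by rw [hsw]
    _ = commWith y u * commWith y v := by simp only [commWith, commutatorElement_def]; group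

theorem iterate_commWith_mul (y : G) (n : ℕ) {u v : G} (hu : u ∈ A) (hv : v ∈ A) :
    (commWith y)^[n] (u * v) = (commWith y)^[n] u * (commWith y)^[n] v := by
  induction n with
  | zero => rfl
  | succ n ih =>
    simp only [Function.iterate_succ_apply', ih]
    exact commWith_mul y (iterate_commWith_mem y n hu) (iterate_commWith_mem y n hv)

variable (A) in
def iterCommWithHom (y : G) (n : ℕ) : A →* G where
  toFun a := (commWith y)^[n] a
  map_one' := iterate_commWith_one y n
  map_mul' a b := iterate_commWith_mul y n a.2 b.2

theorem iterate_commWith_zpow (y : G) (n : ℕ) {u : G} (hu : u ∈ A) (k : ℤ) :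
    (commWith y)^[n] (u ^ k) = ((commWith y)^[n] u) ^ k :=
  map_zpow (iterCommWithHom A y n) ⟨u, hu⟩ k

theorem iterate_commWith_pow (y : G) (n : ℕ) {u : G} (hu : u ∈ A) (k : ℕ) :
    (commWith y)^[n] (u ^ k) = ((commWith y)^[n] u) ^ k :=
  map_pow (iterCommWithHom A y n) ⟨u, hu⟩ k

variable (A) in
def commKer (y : G) (j : ℕ) : Subgroup G := (iterCommWithHom A y j).ker.map A.subtype

theorem mem_commKer {y u : G} {j : ℕ} : u ∈ commKer A y j ↔ u ∈ A ∧ (commWith y)^[j] u = 1 :=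
  ⟨by rintro ⟨a, ha, rfl⟩; exact ⟨a.2, ha⟩, fun ⟨hu, h⟩ => ⟨⟨u, hu⟩, h, rfl⟩⟩

theorem commKer_le (y : G) (j : ℕ) : commKer A y j ≤ A := fun _ hu => (mem_commKer.mp hu).1

theorem commKer_zero (y : G) : commKer A y 0 = ⊥ :=
  eq_bot_iff.mpr fun _ hu => (mem_commKer.mp hu).2

theorem commKer_le_succ (y : G) (j : ℕ) : commKer A y j ≤ commKer A y (j + 1) := by
  intro u hu
  obtain ⟨huA, hu1⟩ := mem_commKer.mp hu
  exact mem_commKer.mpr ⟨huA, by rw [Function.iterate_succ_apply', hu1, commWith_one]⟩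

theorem conj_mem_commKer {y u : G} {j : ℕ} (hu : u ∈ commKer A y j) :
    y * u * y⁻¹ ∈ commKer A y j := by
  obtain ⟨huA, hu1⟩ := mem_commKer.mp hu
  exact mem_commKer.mpr ⟨Normal.conj_mem ‹_› u huA y, by rw [iterate_commWith_conj, hu1]; group⟩

end CommWith

section CommKer

variable {G : Type*} [Group G] {A : Subgroup G} [A.Normal] [IsMulCommutative A]
  {p : ℕ} [Fact p.Prime] (hAp : A.index = p) {y : G} (hy : y ∉ A)
include hAp hy

theorem commutator_mem_commKer {j : ℕ} {u : G} (hu : u ∈ commKer A y (j + 1)) (z : G) :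
    ⁅u, z⁆ ∈ commKer A y j := by
  obtain ⟨huA, hu1⟩ := mem_commKer.mp hu
  have hpow : ∀ m : ℕ, ⁅u, y ^ m⁆ ∈ commKer A y j := by
    intro m
    induction m with
    | zero => rw [pow_zero, commutatorElement_one_right]; exact one_mem _
    | succ m ih =>
      have hid : ⁅u, y ^ (m + 1)⁆ = ⁅u, y⁆ * (y * ⁅u, y ^ m⁆ * y⁻¹) := by
        simp only [commutatorElement_def, pow_succ']
        group
      rw [hid]
      exact mul_mem (mem_commKer.mpr ⟨commWith_mem y huA,
        (Function.iterate_succ_apply (commWith y) j u).symm.trans hu1⟩) (conj_mem_commKer ih)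
  obtain ⟨a, ha, m, rfl⟩ := exists_mem_mul_pow_of_index_eq_prime hAp hy z
  have hcomm : ⁅u, a * y ^ m⁆ = a * ⁅u, y ^ m⁆ * a⁻¹ := by
    rw [commutatorElement_def, commutatorElement_def, mul_inv_rev, ← mul_assoc, ← mul_assoc,
      setLike_mul_comm huA ha]
    group
  rw [hcomm, setLike_mul_comm ha (commKer_le y j (hpow m))]
  simpa using hpow m

theorem commutator_le_commKer {H : Subgroup G} {w : G} (hwH : w ∈ H) (hwA : w ∉ A) {j : ℕ}
    (hHA : H ⊓ A ≤ commKer A y (j + 1)) : ⁅H, H⁆ ≤ commKer A y j := by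
  have hdec : ∀ g ∈ H, ∃ u ∈ commKer A y (j + 1), ∃ a : ℕ, g = u * w ^ a := by
    intro g hg
    obtain ⟨u, hu, a, rfl⟩ := exists_mem_mul_pow_of_index_eq_prime hAp hwA g
    exact ⟨u, hHA ⟨by simpa using mul_mem hg (inv_mem (pow_mem hwH a)), hu⟩, a, rfl⟩
  rw [commutator_le]
  intro g hg h hh
  obtain ⟨u, hu, a, rfl⟩ := hdec g hg
  obtain ⟨v, hv, b, rfl⟩ := hdec h hh
  have hc : ⁅w ^ a, v⁆ ∈ commKer A y j := by
    rw [← commutatorElement_inv]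
    exact inv_mem (commutator_mem_commKer hAp hy hv _)
  have hid : ⁅u * w ^ a, v * w ^ b⁆ = u * ⁅w ^ a, v⁆ * u⁻¹ * ⁅u, v * w ^ b⁆ := by
    simp only [commutatorElement_def]
    group
  rw [hid, setLike_mul_comm (commKer_le y (j + 1) hu) (commKer_le y j hc), mul_inv_cancel_right]
  exact mul_mem hc (commutator_mem_commKer hAp hy hu _)

theorem lowerCentralSeries_eq_bot_of_inf_le_commKer {H : Subgroup G} {w : G} (hwH : w ∈ H)
    (hwA : w ∉ A) {n : ℕ} (hn : 1 ≤ n) (hHA : H ⊓ A ≤ commKer A y n) :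
    H.lowerCentralSeries n = ⊥ := by
  have hchain : ∀ k j, H ⊓ A ≤ commKer A y (j + k + 1) →
      H.lowerCentralSeries (k + 1) ≤ commKer A y j := by
    intro k
    induction k with
    | zero => exact fun j hj => commutator_le_commKer hAp hy hwH hwA hj
    | succ k ih =>
      intro j hj
      rw [Subgroup.lowerCentralSeries_succ, commutator_le]
      have hj' : H ⊓ A ≤ commKer A y (j + 1 + k + 1) := by
        rwa [show j + 1 + k + 1 = j + (k + 1) + 1 by omega]
      exact fun g hg h _ => commutator_mem_commKer hAp hy (ih (j + 1) hj' hg) h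
  obtain ⟨k, rfl⟩ := Nat.exists_eq_add_of_le' hn
  exact eq_bot_iff.mpr ((hchain k 0 (by simpa using hHA)).trans (commKer_zero y).le)

end CommKer

section ClassDrop

variable {G : Type*} [Group G] {A : Subgroup G}

theorem commWith_pow_eq_one [IsMulCommutative A] {y z : G} {m : ℕ} (hym : y ^ m ∈ A) (hz : z ∈ A)
    (h : commWith y (commWith y z) = 1) : commWith y z ^ m = 1 := by
  set c := commWith y z
  have hcy : Commute c y := commutatorElement_eq_one_iff_mul_comm.mp h
  have hconj : ∀ k : ℕ, y ^ k * z * (y ^ k)⁻¹ = c⁻¹ ^ k * z := by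
    intro k
    induction k with
    | zero => simp
    | succ k ih =>
      calc y ^ (k + 1) * z * (y ^ (k + 1))⁻¹ = y * (y ^ k * z * (y ^ k)⁻¹) * y⁻¹ := by group
        _ = (y * c⁻¹ ^ k * y⁻¹) * (y * z * y⁻¹) := by rw [ih]; group
        _ = c⁻¹ ^ (k + 1) * z := by
            rw [(hcy.inv_left.pow_left k).symm.mul_inv_cancel, pow_succ, mul_assoc]
            simp only [c, commWith, commutatorElement_def]
            group
  have hm := hconj m
  rw [setLike_mul_comm hym hz, mul_inv_cancel_right, eq_comm, mul_eq_right, inv_pow,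
    inv_eq_one] at hm
  exact hm

variable [A.Normal] {p : ℕ} [hp : Fact p.Prime] (hAp : A.index = p) {x y : G} (hxA : x ∈ A)
include hAp hxA

theorem notMem_of_lt_closure_pair {L : Subgroup G} (hLM : L < closure {x, y})
    (hpL : ∀ m ∈ closure {x, y}, m ^ p ∈ L) (hcL : (closure {x, y}).lowerCentralSeries 1 ≤ L)
    {w : G} (hwL : w ∈ L) (hwA : w ∉ A) : x ∉ L := by
  intro hxL
  obtain ⟨E, k, d, hd, hw⟩ := exists_eq_zpow_mul_zpow_mul_of_mem_closure_pair (hLM.le hwL)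
  have hykL : y ^ k ∈ L := by
    rw [show y ^ k = (x ^ E)⁻¹ * w * d⁻¹ by rw [hw]; group]
    exact mul_mem (mul_mem (inv_mem (zpow_mem hxL E)) hwL) (inv_mem (hcL hd))
  have hk : ¬ (p : ℤ) ∣ k := by
    rintro ⟨j, rfl⟩
    refine hwA (hw ▸ mul_mem (mul_mem (zpow_mem hxA E) ?_)
      (commutator_le_of_index_eq_prime hAp _ _ hd))
    rw [zpow_mul, zpow_natCast]
    exact zpow_mem (hAp ▸ A.pow_index_mem y) j
  have hyL := mem_of_pow_prime_mem_of_zpow_mem hp.out (hpL y (subset_closure (by simp))) hykL hk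
  exact hLM.not_ge ((closure_le L).mpr (Set.insert_subset hxL (Set.singleton_subset_iff.mpr hyL)))

variable [IsMulCommutative A] (hy : y ∉ A)
include hy

theorem inf_le_commKer_of_lt_closure_pair {L : Subgroup G} (hLM : L < closure {x, y})
    (hpL : ∀ m ∈ closure {x, y}, m ^ p ∈ L) (hcL : (closure {x, y}).lowerCentralSeries 1 ≤ L)
    (hxL : x ∉ L) {n : ℕ} (hn : 1 ≤ n) (hM : (closure {x, y}).lowerCentralSeries (n + 1) = ⊥) :
    L ⊓ A ≤ commKer A y n := by
  set M := closure ({x, y} : Set G)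
  have hxM : x ∈ M := subset_closure (by simp)
  have hyM : y ∈ M := subset_closure (by simp)
  have hM'A : M.lowerCentralSeries 1 ≤ A := commutator_le_of_index_eq_prime hAp _ _
  have hM'ker : ∀ d ∈ M.lowerCentralSeries 1, (commWith y)^[n] d = 1 := fun d hd =>
    iterate_commWith_eq_one_of_lowerCentralSeries_eq_bot hyM hd (by rwa [add_comm])
  obtain ⟨n, rfl⟩ := Nat.exists_eq_add_of_le' hn
  have hyk : ∀ k : ℤ, (commWith y)^[n + 1] (y ^ k) = 1 := fun k => by
    rw [Function.iterate_succ_apply, commWith,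
      commutatorElement_eq_one_iff_mul_comm.mpr ((Commute.refl y).zpow_left k).eq,
      iterate_commWith_one]
  have hxp : ((commWith y)^[n + 1] x) ^ p = 1 := by
    have hx := iterate_commWith_eq_one_of_lowerCentralSeries_eq_bot (j := 0) (k := n + 2) hyM hxM
      (by rwa [zero_add])
    rw [Function.iterate_succ_apply', Function.iterate_succ_apply'] at hx
    rw [Function.iterate_succ_apply']
    exact commWith_pow_eq_one (hAp ▸ A.pow_index_mem y) (iterate_commWith_mem y n hxA) hx
  -- Write `u = x ^ E * y ^ k * d`: `u ∈ A` forces `p ∣ k`, then `x ∉ L` forces `p ∣ E`, and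
  -- `(commWith y)^[n]` kills each factor.
  rintro u ⟨huL, huA⟩
  obtain ⟨E, k, d, hd, rfl⟩ := exists_eq_zpow_mul_zpow_mul_of_mem_closure_pair (hLM.le huL)
  have hykA : y ^ k ∈ A := by
    rw [show y ^ k = (x ^ E)⁻¹ * (x ^ E * y ^ k * d) * d⁻¹ by group]
    exact mul_mem (mul_mem (inv_mem (zpow_mem hxA E)) huA) (inv_mem (hM'A hd))
  obtain ⟨j, rfl⟩ := dvd_of_zpow_mem_of_index_eq_prime hAp hy hykA
  obtain ⟨e, rfl⟩ : (p : ℤ) ∣ E := by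
    by_contra hE
    refine hxL (mem_of_pow_prime_mem_of_zpow_mem hp.out (hpL x hxM) ?_ hE)
    have hykL : y ^ ((p : ℤ) * j) ∈ L := by
      rw [zpow_mul, zpow_natCast]
      exact zpow_mem (hpL y hyM) j
    rw [show x ^ E = (x ^ E * y ^ ((p : ℤ) * j) * d) * d⁻¹ * (y ^ ((p : ℤ) * j))⁻¹ by group]
    exact mul_mem (mul_mem huL (inv_mem (hcL hd))) (inv_mem hykL)
  refine mem_commKer.mpr ⟨huA, ?_⟩
  rw [iterate_commWith_mul y _ (mul_mem (zpow_mem hxA _) hykA) (hM'A hd),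
    iterate_commWith_mul y _ (zpow_mem hxA _) hykA, iterate_commWith_zpow y _ hxA, zpow_mul,
    zpow_natCast, hxp, one_zpow, hyk, hM'ker d hd, one_mul, one_mul]

theorem lowerCentralSeries_eq_bot_of_lt_closure_pair {L : Subgroup G} (hLM : L < closure {x, y})
    (hpL : ∀ m ∈ closure {x, y}, m ^ p ∈ L) (hcL : (closure {x, y}).lowerCentralSeries 1 ≤ L)
    {w : G} (hwL : w ∈ L) (hwA : w ∉ A) {n : ℕ} (hn : 1 ≤ n)
    (hM : (closure {x, y}).lowerCentralSeries (n + 1) = ⊥) : L.lowerCentralSeries n = ⊥ :=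
  lowerCentralSeries_eq_bot_of_inf_le_commKer hAp hy hwL hwA hn
    (inf_le_commKer_of_lt_closure_pair hAp hxA hy hLM hpL hcL
      (notMem_of_lt_closure_pair hAp hxA hLM hpL hcL hwL hwA) hn hM)

end ClassDrop

section ClassLowerBound

variable {G : Type*} [Group G] {A : Subgroup G} [A.Normal] {p : ℕ} [hp : Fact p.Prime]

theorem exists_closure_pair_eq_of_index_eq_prime (hAp : A.index = p) {a b : G}
    (hab : ¬ closure {a, b} ≤ A) : ∃ x ∈ A, ∃ y ∉ A, closure {a, b} = closure {x, y} := by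
  by_cases hbA : b ∈ A
  · have haA : a ∉ A := fun haA => hab ((closure_le A).mpr (by simp [Set.insert_subset_iff, *]))
    exact ⟨b, hbA, a, haA, by rw [Set.pair_comm]⟩
  by_cases haA : a ∈ A
  · exact ⟨a, haA, b, hbA, rfl⟩
  obtain ⟨x, hxA, m, rfl⟩ := exists_mem_mul_pow_of_index_eq_prime hAp hbA a
  refine ⟨x, hxA, b, hbA, le_antisymm ?_ ?_⟩
  · have hb : b ∈ closure {x, b} := subset_closure (by simp)
    refine (closure_le _).mpr (Set.insert_subset ?_ (by simpa using hb))
    exact mul_mem (subset_closure (by simp)) (pow_mem hb m)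
  · have hb : b ∈ closure {x * b ^ m, b} := subset_closure (by simp)
    refine (closure_le _).mpr (Set.insert_subset ?_ (by simpa using hb))
    simpa using mul_mem (subset_closure (by simp) : x * b ^ m ∈ closure {x * b ^ m, b})
      (inv_mem (pow_mem hb m))

variable [Finite G] [IsMulCommutative A] (hG : IsPGroup p G) (hAp : A.index = p)
  (h2gen : ∀ H : Subgroup G, ¬ (∀ x ∈ H, ∀ y ∈ H, x * y = y * x) →
    ∃ a b : G, H = closure {a, b})
include hG hAp h2gen

theorem IsPGroup.lowerCentralSeries_top_add_ne_bot {s : ℕ} {H : Subgroup G}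
    (hH : ¬ ∀ x ∈ H, ∀ y ∈ H, x * y = y * x) (hidx : H.index = p ^ s) {n : ℕ} (hn : 1 ≤ n)
    (hHn : H.lowerCentralSeries n ≠ ⊥) : (⊤ : Subgroup G).lowerCentralSeries (n + s) ≠ ⊥ := by
  induction s generalizing H n with
  | zero =>
    have hH1 : H = ⊤ := index_eq_one.mp (by simpa using hidx)
    rwa [hH1] at hHn
  | succ s ih =>
    obtain ⟨M, hHM, hMidx⟩ := hG.exists_le_index_eq_pow (m := s) (hidx ▸ pow_dvd_pow p s.le_succ)
    have hrel : H.relIndex M = p := by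
      have h := relIndex_mul_index hHM
      rw [hMidx, hidx, pow_succ'] at h
      exact Nat.eq_of_mul_eq_mul_right (pow_pos hp.out.pos s) h
    have hM : ¬ ∀ x ∈ M, ∀ y ∈ M, x * y = y * x := fun hM =>
      hH fun u hu v hv => hM u (hHM hu) v (hHM hv)
    obtain ⟨w, hwH, hwA⟩ : ∃ w ∈ H, w ∉ A := by
      by_contra! hHA
      exact hH fun u hu v hv => setLike_mul_comm (hHA u hu) (hHA v hv)
    obtain ⟨a, b, rfl⟩ := h2gen M hM
    obtain ⟨x, hxA, y, hy, hxy⟩ := exists_closure_pair_eq_of_index_eq_prime hAp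
      (fun hMA => hwA (hMA (hHM hwH)))
    rw [hxy] at hHM hrel
    have hHlt : H < closure {x, y} :=
      lt_of_le_of_ne hHM fun h => hp.out.one_lt.ne' (by rw [← hrel, h, relIndex_self])
    have hMn : (closure {x, y}).lowerCentralSeries (n + 1) ≠ ⊥ := fun hbot =>
      hHn (lowerCentralSeries_eq_bot_of_lt_closure_pair hAp hxA hy hHlt
        (fun m hm => hG.pow_mem_of_relIndex_eq_prime hrel hm)
        (hG.commutator_le_of_relIndex_eq_prime hrel) hwH hwA hn hbot)
    rw [← add_assoc, add_right_comm]
    exact ih hM hMidx (by omega) (by rwa [hxy])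

end ClassLowerBound

section ClassUpperBound

variable {G : Type*} [Group G] {A : Subgroup G} [A.Normal] [IsMulCommutative A] {y : G}

theorem commKer_succ_eq_of_eq {j : ℕ} (h : commKer A y j = commKer A y (j + 1)) :
    commKer A y (j + 1) = commKer A y (j + 2) := by
  refine le_antisymm (commKer_le_succ y _) fun u hu => ?_
  obtain ⟨huA, hu1⟩ := mem_commKer.mp hu
  have hyu : commWith y u ∈ commKer A y j := by
    rw [h, mem_commKer]
    exact ⟨commWith_mem y huA, hu1⟩
  exact mem_commKer.mpr ⟨huA, (mem_commKer.mp hyu).2⟩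

theorem commKer_ne_succ_of_le {c : ℕ} (hc : commKer A y c ≠ commKer A y (c + 1)) {j : ℕ}
    (hj : j ≤ c) : commKer A y j ≠ commKer A y (j + 1) := by
  intro h
  have hstable : ∀ i, commKer A y (j + i) = commKer A y (j + i + 1) := fun i =>
    Nat.rec h (fun i ih => commKer_succ_eq_of_eq ih) i
  exact hc (by simpa [Nat.add_sub_cancel' hj] using hstable (c - j))

variable {p : ℕ} [hp : Fact p.Prime]

theorem IsPGroup.prime_pow_mul_card_commKer_le [Finite G] (hG : IsPGroup p G) {c : ℕ}
    (hc : commKer A y c ≠ commKer A y (c + 1)) :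
    p ^ c * Nat.card (commKer A y 1) ≤ Nat.card (commKer A y (c + 1)) := by
  have hchain : ∀ j ≤ c, p ^ j * Nat.card (commKer A y 1) ≤ Nat.card (commKer A y (j + 1)) := by
    intro j
    induction j with
    | zero => simp
    | succ j ih =>
      intro hj
      calc p ^ (j + 1) * Nat.card (commKer A y 1)
          = p * (p ^ j * Nat.card (commKer A y 1)) := by ring
        _ ≤ p * Nat.card (commKer A y (j + 1)) := Nat.mul_le_mul_left p (ih (by omega))
        _ ≤ Nat.card (commKer A y (j + 1 + 1)) := hG.prime_mul_card_le_of_lt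
            (lt_of_le_of_ne (commKer_le_succ y _) (commKer_ne_succ_of_le hc hj))
  exact hchain c le_rfl

variable (hAp : A.index = p) (hy : y ∉ A)
include hAp hy

theorem closure_pair_inf_le_sup_zpowers {x : G} (hxA : x ∈ A)
    (hx : commWith y (commWith y x) = 1) : closure {x, y} ⊓ A ≤ commKer A y 1 ⊔ zpowers x := by
  have hN : closure {x, commWith y x} ≤ commKer A y 1 ⊔ zpowers x :=
    (closure_le _).mpr (Set.insert_subset (mem_sup_right (mem_zpowers x))
      (by simpa using mem_sup_left ((mem_commKer (j := 1)).mpr ⟨commWith_mem y hxA, hx⟩)))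
  have hNA : closure {x, commWith y x} ≤ A :=
    (closure_le A).mpr (Set.insert_subset hxA (by simpa using commWith_mem y hxA))
  rintro u ⟨hu, huA⟩
  obtain ⟨v, hv, k, rfl⟩ := exists_eq_mul_zpow_of_mem_closure_insert
    (mem_normalizer_closure_commWith hx) (closure_mono (Set.insert_subset (by simp) (by simp)) hu)
  have hykA : y ^ k ∈ A := by simpa using mul_mem (inv_mem (hNA hv)) huA
  obtain ⟨j, rfl⟩ := dvd_of_zpow_mem_of_index_eq_prime hAp hy hykA
  have hypZ : y ^ p ∈ commKer A y 1 := mem_commKer.mpr ⟨hAp ▸ A.pow_index_mem y,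
    commutatorElement_eq_one_iff_mul_comm.mpr ((Commute.refl y).pow_left p).eq⟩
  rw [zpow_mul, zpow_natCast]
  exact mul_mem (hN hv) (mem_sup_left (zpow_mem hypZ j))

theorem card_closure_pair_le [Finite G] {x : G} (hxA : x ∈ A) (hx : commWith y (commWith y x) = 1)
    (hxp : commWith y x ^ p = 1) :
    Nat.card (closure {x, y}) ≤ p ^ 2 * Nat.card (commKer A y 1) := by
  set Z := commKer A y 1
  have hxpZ : x ^ p ∈ Z := mem_commKer.mpr ⟨pow_mem hxA p,
    (iterate_commWith_pow y 1 hxA p).trans (by simpa using hxp)⟩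
  have hW : Nat.card (Z ⊔ zpowers x : Subgroup G) ≤ p * Nat.card Z :=
    card_sup_zpowers_le (centralizer_le_normalizer _ (mem_centralizer_iff.mpr fun z hz =>
      setLike_mul_comm (commKer_le y 1 hz) hxA)) hp.out.pos hxpZ
  have hKA : Nat.card (closure {x, y}) ≤ p * Nat.card (closure {x, y} ⊓ A : Subgroup G) := by
    have h := relIndex_mul_relIndex ⊥ _ _ bot_le (inf_le_left : closure {x, y} ⊓ A ≤ _)
    rw [relIndex_bot_left, relIndex_bot_left, inf_relIndex_left] at h
    rw [← h, mul_comm p]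
    exact Nat.mul_le_mul_left _ (Nat.le_of_dvd hp.out.pos (hAp ▸ relIndex_dvd_index_of_normal _ _))
  calc Nat.card (closure {x, y}) ≤ p * Nat.card (closure {x, y} ⊓ A : Subgroup G) := hKA
    _ ≤ p * Nat.card (Z ⊔ zpowers x : Subgroup G) :=
        Nat.mul_le_mul_left p (card_le_of_le (closure_pair_inf_le_sup_zpowers hAp hy hxA hx))
    _ ≤ p * (p * Nat.card Z) := Nat.mul_le_mul_left p hW
    _ = p ^ 2 * Nat.card Z := by ring

end ClassUpperBound

section Class

variable {G : Type*} [Group G] [Finite G] {p : ℕ} [hp : Fact p.Prime] (hG : IsPGroup p G)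
  {A : Subgroup G} [A.Normal] [IsMulCommutative A]
include hG

theorem IsPGroup.exists_commWith_orderOf_eq_prime {y : G} {c : ℕ}
    (hc : ¬ A ≤ commKer A y (c + 1)) (hc' : A ≤ commKer A y (c + 2)) :
    ∃ x ∈ A, commWith y (commWith y x) = 1 ∧ orderOf (commWith y x) = p := by
  obtain ⟨a, haA, ha⟩ : ∃ a ∈ A, (commWith y)^[c + 1] a ≠ 1 := by
    by_contra! h
    exact hc fun u hu => mem_commKer.mpr ⟨hu, h u hu⟩
  set b := (commWith y)^[c + 1] a
  set q := orderOf b / p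
  refine ⟨(commWith y)^[c] (a ^ q), iterate_commWith_mem y c (pow_mem haA q), ?_, ?_⟩
  · rw [← Function.iterate_succ_apply' (commWith y), ← Function.iterate_succ_apply' (commWith y)]
    exact (mem_commKer.mp (hc' (pow_mem haA q))).2
  · rw [← Function.iterate_succ_apply' (commWith y), iterate_commWith_pow y _ haA]
    exact orderOf_pow_orderOf_div (orderOf_pos b).ne' (hG.dvd_orderOf ha)

variable (hAp : A.index = p)
include hAp

theorem IsPGroup.exists_not_commute_prime_pow_dvd_index_of_class {c : ℕ}
    (hc : (⊤ : Subgroup G).lowerCentralSeries (c + 1) ≠ ⊥)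
    (hc' : (⊤ : Subgroup G).lowerCentralSeries (c + 2) = ⊥) :
    ∃ K : Subgroup G, (¬ ∀ x ∈ K, ∀ y ∈ K, x * y = y * x) ∧ p ^ c ∣ K.index := by
  obtain ⟨y, hy⟩ : ∃ y, y ∉ A := by
    by_contra! h
    exact hp.out.one_lt.ne' (by rw [← hAp, (eq_top_iff' A).mpr h, index_top])
  have hA : A ≤ commKer A y (c + 2) := fun u hu => mem_commKer.mpr ⟨hu,
    iterate_commWith_eq_one_of_lowerCentralSeries_eq_bot (j := 0) (mem_top y) (mem_top u)
      (by rwa [zero_add])⟩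
  have hne : ¬ A ≤ commKer A y (c + 1) := fun h =>
    hc (lowerCentralSeries_eq_bot_of_inf_le_commKer hAp hy (mem_top y) hy (by omega)
      (inf_le_right.trans h))
  obtain ⟨x, hxA, hx, hxp⟩ := hG.exists_commWith_orderOf_eq_prime hne hA
  refine ⟨closure {x, y}, fun h => ?_, ?_⟩
  · have := h x (subset_closure (by simp)) y (subset_closure (by simp))
    rw [← commutatorElement_eq_one_iff_mul_comm] at this
    exact hp.out.one_lt.ne' (by rw [← hxp]; exact orderOf_eq_one_iff.mpr this)
  set Z := commKer A y 1
  have hAZ : p ^ (c + 1) * Nat.card Z ≤ Nat.card A := by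
    have h := hG.prime_pow_mul_card_commKer_le (c := c + 1) fun h => hne (h ▸ hA)
    rwa [le_antisymm (commKer_le y _) hA] at h
  refine hG.prime_pow_dvd_index_of_mul_card_le ?_
  calc p ^ c * Nat.card (closure {x, y}) ≤ p ^ c * (p ^ 2 * Nat.card Z) :=
        Nat.mul_le_mul_left _ (card_closure_pair_le hAp hy hxA hx (hxp ▸ pow_orderOf_eq_one _))
    _ = p ^ (c + 1) * Nat.card Z * p := by ring
    _ ≤ Nat.card A * p := Nat.mul_le_mul_right p hAZ
    _ = Nat.card G := by rw [← hAp, card_mul_index]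

theorem IsPGroup.exists_not_commute_prime_pow_dvd_index {c : ℕ}
    (hc : (⊤ : Subgroup G).lowerCentralSeries (c + 1) ≠ ⊥) :
    ∃ K : Subgroup G, (¬ ∀ x ∈ K, ∀ y ∈ K, x * y = y * x) ∧ p ^ c ∣ K.index := by
  have := hG.isNilpotent
  have hcd : c + 2 ≤ Group.nilpotencyClass G := by
    by_contra h
    exact hc (Subgroup.lowerCentralSeries_eq_bot_iff_nilpotencyClass_le.mpr (by omega))
  obtain ⟨K, hK, hdvd⟩ := hG.exists_not_commute_prime_pow_dvd_index_of_class hAp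
    (c := Group.nilpotencyClass G - 2)
    (by rw [Ne, Subgroup.lowerCentralSeries_eq_bot_iff_nilpotencyClass_le]; omega)
    (Subgroup.lowerCentralSeries_eq_bot_iff_nilpotencyClass_le.mpr (by omega))
  exact ⟨K, hK, (pow_dvd_pow p (by omega)).trans hdvd⟩

theorem IsPGroup.lowerCentralSeries_top_succ_ne_bot
    (h2gen : ∀ H : Subgroup G, ¬ (∀ x ∈ H, ∀ y ∈ H, x * y = y * x) →
      ∃ a b : G, H = closure {a, b})
    {H : Subgroup G} (hH : ¬ ∀ x ∈ H, ∀ y ∈ H, x * y = y * x) {s : ℕ} (hidx : H.index = p ^ s) :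
    (⊤ : Subgroup G).lowerCentralSeries (s + 1) ≠ ⊥ := by
  have hH1 : H.lowerCentralSeries 1 ≠ ⊥ := fun h => hH fun x hx y hy => by
    have hxy : ⁅x, y⁆ ∈ H.lowerCentralSeries 1 := commutator_mem_commutator hx hy
    rw [h, mem_bot] at hxy
    exact commutatorElement_eq_one_iff_mul_comm.mp hxy
  rw [add_comm]
  exact hG.lowerCentralSeries_top_add_ne_bot hAp h2gen hH hidx le_rfl hH1

end Class

theorem isAtGroup_iff_class_eq_general (p : ℕ) (hp : p.Prime) (t : ℕ) (ht : 1 ≤ t)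
    (G : Type*) [Group G] [Finite G] (hG : IsPGroup p G)
    (hab : ∃ A : Subgroup G, A.index = p ∧ ∀ x ∈ A, ∀ y ∈ A, x * y = y * x)
    (h2gen : ∀ H : Subgroup G, ¬ (∀ x ∈ H, ∀ y ∈ H, x * y = y * x) →
      ∃ a b : G, H = Subgroup.closure {a, b}) :
    IsAtGroup p t G ↔
      ((⊤ : Subgroup G).lowerCentralSeries (t + 1) = ⊥ ∧ (⊤ : Subgroup G).lowerCentralSeries t ≠ ⊥) := by
  have : Fact p.Prime := ⟨hp⟩
  obtain ⟨A, hAp, hAab⟩ := hab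
  have : A.Normal := hG.normal_of_index_eq_prime hAp
  have : IsMulCommutative A := ⟨⟨fun a b => Subtype.ext (hAab a a.2 b b.2)⟩⟩
  have not_comm_mono : ∀ {K L : Subgroup G}, K ≤ L → (¬ ∀ x ∈ K, ∀ y ∈ K, x * y = y * x) →
      ¬ ∀ x ∈ L, ∀ y ∈ L, x * y = y * x :=
    fun hKL hK hL => hK fun x hx y hy => hL x (hKL hx) y (hKL hy)
  constructor
  · rintro ⟨habel, H, hHidx, hH⟩
    refine ⟨?_, ?_⟩
    · by_contra hne
      obtain ⟨K, hK, hdvd⟩ := hG.exists_not_commute_prime_pow_dvd_index hAp hne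
      obtain ⟨L, hKL, hL⟩ := hG.exists_le_index_eq_pow hdvd
      exact not_comm_mono hKL hK (habel L hL)
    · simpa [Nat.sub_add_cancel ht] using hG.lowerCentralSeries_top_succ_ne_bot hAp h2gen hH hHidx
  · rintro ⟨hbot, hne⟩
    refine ⟨fun H hH => ?_, ?_⟩
    · by_contra hH'
      exact hG.lowerCentralSeries_top_succ_ne_bot hAp h2gen hH' hH hbot
    · obtain ⟨K, hK, hdvd⟩ := hG.exists_not_commute_prime_pow_dvd_index hAp (c := t - 1)
        (by rwa [Nat.sub_add_cancel ht])
      obtain ⟨L, hKL, hL⟩ := hG.exists_le_index_eq_pow hdvd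
      exact ⟨L, hL, not_comm_mono hKL hK⟩

/-- Let `G` be a finite non-abelian `p`-group having an abelian subgroup of
index `p`, in which every non-abelian subgroup is generated by two elements. Then `G` is
an `A_t`-group if and only if the nilpotency class of `G` equals `t + 1`. -/
theorem isAtGroup_iff_class_eq (p : ℕ) (hp : p.Prime) (t : ℕ) (ht : 1 ≤ t)
    (G : Type*) [Group G] [Finite G] (hG : IsPGroup p G)
    (hnonab : ¬ ∀ x y : G, x * y = y * x)
    (hab : ∃ A : Subgroup G, A.index = p ∧ ∀ x ∈ A, ∀ y ∈ A, x * y = y * x)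
    (h2gen : ∀ H : Subgroup G, ¬ (∀ x ∈ H, ∀ y ∈ H, x * y = y * x) →
      ∃ a b : G, H = Subgroup.closure {a, b}) :
    IsAtGroup p t G ↔
      ((⊤ : Subgroup G).lowerCentralSeries (t + 1) = ⊥ ∧ (⊤ : Subgroup G).lowerCentralSeries t ≠ ⊥) :=
  isAtGroup_iff_class_eq_general p hp t ht G hG hab h2gen
end

section
/- Let p be a prime and G a finite p-group that is an A_2-group. Then d(G) ≤ 3 and the nilpotency class of G is at most 3. -/
open Subgroup
open scoped commutatorElement

def SubgroupsOfIndexAbelian (G : Type*) [Group G] (n : ℕ) : Prop :=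
  ∀ H : Subgroup G, H.index = n → ∀ x ∈ H, ∀ y ∈ H, x * y = y * x

theorem SubgroupsOfIndexAbelian.subgroup {G : Type*} [Group G] {m n : ℕ}
    (hab : SubgroupsOfIndexAbelian G (m * n)) {M : Subgroup G} (hM : M.index = n) :
    SubgroupsOfIndexAbelian M m := fun K hK a ha b hb =>
  Subtype.ext <| hab (K.map M.subtype) (by rw [index_map_subtype, hK, hM]) a ⟨a, ha, rfl⟩ b
    ⟨b, hb, rfl⟩

namespace Subgroup
variable {G : Type*} [Group G]

theorem isCoatom_of_index_prime {H : Subgroup G} (hH : H.index.Prime) : IsCoatom H := by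
  refine ⟨fun h => hH.ne_one (index_eq_one.mpr h), fun K hHK => ?_⟩
  rcases (Nat.dvd_prime hH).mp (index_dvd_of_le hHK.le) with hK | hK
  · exact index_eq_one.mp hK
  · have h1 : H.relIndex K = 1 := by
      have := relIndex_mul_index hHK.le
      rw [hK] at this
      exact (Nat.mul_eq_right hH.ne_zero).mp this
    exact absurd (relIndex_eq_one.mp h1) hHK.not_ge

theorem index_inf_eq_sq_of_index_eq_prime {p : ℕ} (hp : p.Prime) {M N : Subgroup G} [N.Normal]
    (hM : M.index = p) (hN : N.index = p) (hMN : M ≠ N) : (M ⊓ N).index = p ^ 2 := by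
  have hNM : ¬ M ≤ N := fun h => hMN <|
    ((isCoatom_of_index_prime (hM ▸ hp)).le_iff_eq (isCoatom_of_index_prime (hN ▸ hp)).ne_top
      |>.mp h).symm
  have hrel : N.relIndex M = p := by
    refine ((Nat.dvd_prime hp).mp (hN ▸ relIndex_dvd_index_of_normal N M)).resolve_left ?_
    exact fun h => hNM (relIndex_eq_one.mp h)
  rw [← relIndex_mul_index inf_le_left, inf_relIndex_left, hrel, hM, sq]

theorem commutator_sup_right_le {H K₁ K₂ N : Subgroup G} [N.Normal]
    (h₁ : ⁅H, K₁⁆ ≤ N) (h₂ : ⁅H, K₂⁆ ≤ N) : ⁅H, K₁ ⊔ K₂⁆ ≤ N := by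
  rw [← QuotientGroup.ker_mk' N, ← map_eq_bot_iff, map_commutator, commutator_comm,
    commutator_eq_bot_iff_le_centralizer] at h₁ h₂ ⊢
  rw [map_sup]
  exact sup_le h₁ h₂

theorem normal_of_le_center {H : Subgroup G} (h : H ≤ center G) : H.Normal :=
  ⟨fun n hn g => by rwa [mem_center_iff.mp (h hn) g, mul_inv_cancel_right]⟩

theorem isMulCommutative_of_closure_eq_top {S : Set G} (hS : closure S = ⊤)
    (hcomm : ∀ a ∈ S, ∀ b ∈ S, a * b = b * a) : IsMulCommutative G :=
  have := isMulCommutative_closure hcomm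
  ⟨⟨fun a b => setLike_mul_comm (s := closure S) (hS ▸ mem_top a) (hS ▸ mem_top b)⟩⟩

end Subgroup

theorem commutatorElement_pow_right_of_commute {G : Type*} [Group G] {x y : G}
    (h : Commute y ⁅x, y⁆) (n : ℕ) : ⁅x, y ^ n⁆ = ⁅x, y⁆ ^ n := by
  induction n with
  | zero => simp
  | succ n ih =>
    rw [pow_succ', commutatorElement_mul_right_eq_mul_conj, ih, mul_assoc ⁅x, y⁆,
      (h.pow_right n).eq, ← mul_assoc, mul_inv_cancel_right, pow_succ']

namespace IsPGroup
variable {p : ℕ} [hp : Fact p.Prime] {G : Type*} [Group G] [Finite G]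

theorem exists_le_index_eq_prime (hG : IsPGroup p G) {K : Subgroup G} (hK : K ≠ ⊤) :
    ∃ L : Subgroup G, K ≤ L ∧ L.index = p := by
  obtain ⟨m, hm⟩ := hG.exists_card_eq
  obtain ⟨n, hn⟩ := (hG.to_subgroup K).exists_card_eq
  have hnm : n < m := by
    have hlt : Nat.card K < Nat.card G :=
      (card_le_of_le (le_top : K ≤ ⊤)).trans_eq card_top |>.lt_of_ne
        (fun h => hK (card_eq_iff_eq_top K |>.mp h))
    rw [hm, hn] at hlt
    exact (Nat.pow_lt_pow_iff_right hp.out.one_lt).mp hlt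
  obtain ⟨L, hL, hKL⟩ := Sylow.exists_subgroup_card_pow_prime_le p
    (hm ▸ pow_dvd_pow p (m.sub_le 1)) K hn (Nat.le_sub_one_of_lt hnm)
  refine ⟨L, hKL, Nat.eq_of_mul_eq_mul_left (pow_pos hp.out.pos (m - 1)) ?_⟩
  rw [← pow_succ, Nat.sub_add_cancel (Nat.one_le_of_lt hnm), ← hm, ← card_mul_index L, hL]

theorem normal_of_index_eq_prime_s16 (hG : IsPGroup p G) {H : Subgroup G} (hH : H.index = p) :
    H.Normal := by
  obtain ⟨m, hm⟩ := hG.exists_card_eq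
  refine normal_of_index_eq_minFac_card ?_
  rw [hH, hm, hp.out.pow_minFac]
  rintro rfl
  rw [pow_zero, ← H.index_mul_card, hH] at hm
  exact hp.out.ne_one (Nat.eq_one_of_mul_eq_one_right hm)

theorem commutator_le_of_index_eq_prime (hG : IsPGroup p G) {H : Subgroup G} (hH : H.index = p) :
    commutator G ≤ H := by
  have := hG.normal_of_index_eq_prime_s16 hH
  have : IsCyclic (G ⧸ H) := isCyclic_of_prime_card (by rw [← index_eq_card, hH])
  exact Normal.quotient_commutative_iff_commutator_le.mp inferInstance

theorem le_center_of_card_dvd_prime (hG : IsPGroup p G) {N : Subgroup G} [N.Normal]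
    (hN : Nat.card N ∣ p) : N ≤ center G := by
  rcases (Nat.dvd_prime hp.out).mp hN with hN1 | hNp
  · rw [card_eq_one.mp hN1]
    exact bot_le
  let _ : MulAction G N := MulAction.compHom N (MulAut.conjNormal : G →* MulAut N)
  have hconj (g : G) (n : N) : ((g • n : N) : G) = g * n * g⁻¹ := MulAut.conjNormal_apply g n
  -- the number of fixed points is `≡ #N = p ≡ 0 [MOD p]` and positive, so every point is fixed
  have hdvd : p ∣ (MulAction.fixedPoints G N).ncard := by
    rw [← Nat.card_coe_set_eq, ← Nat.modEq_zero_iff_dvd]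
    exact (hG.card_modEq_card_fixedPoints N).symm.trans
      (hNp ▸ Nat.modEq_zero_iff_dvd.mpr dvd_rfl)
  have hone : (1 : N) ∈ MulAction.fixedPoints G N := fun g => Subtype.ext (by simp [hconj])
  have hfix : MulAction.fixedPoints G N = Set.univ := by
    rw [Set.eq_univ_iff_ncard]
    refine le_antisymm (Set.ncard_le_card _) (hNp ▸ Nat.le_of_dvd ?_ hdvd)
    exact (Set.ncard_pos (Set.toFinite _)).mpr ⟨1, hone⟩
  intro n hn
  refine mem_center_iff.mpr fun g => ?_
  have hgn : g * n * g⁻¹ = n := by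
    have hfixn : (⟨n, hn⟩ : N) ∈ MulAction.fixedPoints G N := hfix ▸ Set.mem_univ _
    rw [← hconj g ⟨n, hn⟩, hfixn g]
  exact mul_inv_eq_iff_eq_mul.mp hgn

theorem closure_pair_eq_top (hG : IsPGroup p G) (hab : SubgroupsOfIndexAbelian G p)
    {x y : G} (hxy : x * y ≠ y * x) : closure {x, y} = ⊤ := by
  by_contra hne
  obtain ⟨L, hle, hL⟩ := hG.exists_le_index_eq_prime hne
  exact hxy (hab L hL x (hle (subset_closure (by simp))) y (hle (subset_closure (by simp))))

theorem index_centralizer_eq_prime (hG : IsPGroup p G) (hab : SubgroupsOfIndexAbelian G p)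
    {x y : G} (hxy : x * y ≠ y * x) : (centralizer {x}).index = p := by
  have hne : centralizer {x} ≠ ⊤ := fun h =>
    hxy (mem_centralizer_singleton_iff.mp (h ▸ mem_top y)).symm
  obtain ⟨L, hle, hL⟩ := hG.exists_le_index_eq_prime hne
  have hLx : L ≤ centralizer {x} := fun l hl => mem_centralizer_singleton_iff.mpr
    (hab L hL l hl x (hle (mem_centralizer_singleton_iff.mpr rfl)))
  rwa [le_antisymm hLx hle] at hL

theorem commutatorElement_mem_center (hG : IsPGroup p G) (hab : SubgroupsOfIndexAbelian G p)
    {x y : G} (hxy : x * y ≠ y * x) : ⁅x, y⁆ ∈ center G := by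
  have hmem {z w : G} (hzw : z * w ≠ w * z) : ⁅x, y⁆ ∈ centralizer {z} :=
    hG.commutator_le_of_index_eq_prime (hG.index_centralizer_eq_prime hab hzw)
      (commutator_mem_commutator (mem_top x) (mem_top y))
  rw [← centralizer_univ, ← coe_top, ← hG.closure_pair_eq_top hab hxy, centralizer_closure,
    mem_centralizer_iff]
  rintro z (rfl | rfl)
  · exact (mem_centralizer_singleton_iff.mp (hmem hxy)).symm
  · exact (mem_centralizer_singleton_iff.mp (hmem (Ne.symm hxy))).symm

theorem commutatorElement_pow_eq_one (hG : IsPGroup p G) (hab : SubgroupsOfIndexAbelian G p)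
    {x y : G} (hxy : x * y ≠ y * x) : ⁅x, y⁆ ^ p = 1 := by
  have hC := hG.index_centralizer_eq_prime hab hxy
  have := hG.normal_of_index_eq_prime_s16 hC
  have hyp : y ^ p ∈ centralizer {x} := hC ▸ pow_index_mem _ y
  rw [← commutatorElement_pow_right_of_commute
    (mem_center_iff.mp (hG.commutatorElement_mem_center hab hxy) y),
    commutatorElement_eq_one_iff_mul_comm]
  exact (mem_centralizer_singleton_iff.mp hyp).symm

theorem commutator_le_zpowers_commutatorElement (hG : IsPGroup p G)
    (hab : SubgroupsOfIndexAbelian G p) {x y : G} (hxy : x * y ≠ y * x) : commutator G ≤ zpowers ⁅x, y⁆ := by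
  have := normal_of_le_center (zpowers_le.mpr (hG.commutatorElement_mem_center hab hxy))
  set π := QuotientGroup.mk' (zpowers ⁅x, y⁆)
  refine Normal.quotient_commutative_iff_commutator_le.mp
    (isMulCommutative_of_closure_eq_top (S := {π x, π y}) ?_ ?_)
  · rw [← Set.image_pair, ← MonoidHom.map_closure, hG.closure_pair_eq_top hab hxy,
      map_top_of_surjective _ (QuotientGroup.mk'_surjective _)]
  · have hπ : π x * π y = π y * π x := by
      rw [← commutatorElement_eq_one_iff_mul_comm, ← map_commutatorElement,
        QuotientGroup.mk'_apply, QuotientGroup.eq_one_iff]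
      exact mem_zpowers _
    rintro a (rfl | rfl) b (rfl | rfl) <;> first | rfl | exact hπ | exact hπ.symm

theorem card_commutator_dvd_prime (hG : IsPGroup p G) (hab : SubgroupsOfIndexAbelian G p) :
    Nat.card (commutator G) ∣ p := by
  by_cases hcomm : ∀ x y : G, x * y = y * x
  · rw [(commutator_eq_bot_iff G).mpr ⟨⟨hcomm⟩⟩, card_bot]
    exact one_dvd p
  push Not at hcomm
  obtain ⟨x, y, hxy⟩ := hcomm
  calc Nat.card (commutator G) ∣ Nat.card (zpowers ⁅x, y⁆) :=
        card_dvd_of_le (hG.commutator_le_zpowers_commutatorElement hab hxy)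
    _ = orderOf ⁅x, y⁆ := Nat.card_zpowers _
    _ ∣ p := orderOf_dvd_of_pow_eq_one (hG.commutatorElement_pow_eq_one hab hxy)

theorem commutator_le_center_of_index_eq_prime (hG : IsPGroup p G)
    (hab : SubgroupsOfIndexAbelian G (p ^ 2)) {M : Subgroup G} (hM : M.index = p) :
    ⁅M, M⁆ ≤ center G := by
  have := hG.normal_of_index_eq_prime_s16 hM
  refine hG.le_center_of_card_dvd_prime ?_
  rw [← map_subtype_commutator, card_map_of_injective M.subtype_injective]
  exact (hG.to_subgroup M).card_commutator_dvd_prime ((sq p ▸ hab).subgroup hM)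

theorem closure_triple_eq_top (hG : IsPGroup p G) (hab : SubgroupsOfIndexAbelian G (p ^ 2))
    {M : Subgroup G} (hM : M.index = p) {x y g : G} (hx : x ∈ M) (hy : y ∈ M)
    (hxy : x * y ≠ y * x) (hg : g ∉ M) : closure {x, y, g} = ⊤ := by
  by_contra hne
  obtain ⟨L, hle, hL⟩ := hG.exists_le_index_eq_prime hne
  have hLM : L ≠ M := fun h => hg (h ▸ hle (subset_closure (by simp)))
  have := hG.normal_of_index_eq_prime_s16 hM
  exact hxy (hab _ (index_inf_eq_sq_of_index_eq_prime hp.out hL hM hLM)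
    x ⟨hle (subset_closure (by simp)), hx⟩ y ⟨hle (subset_closure (by simp)), hy⟩)

theorem lowerCentralSeries_three_eq_bot_s16 (hG : IsPGroup p G) {M N : Subgroup G}
    (hM : M.index = p) (hN : N.index = p) (hMN : M ≠ N) (hMc : ⁅M, M⁆ ≤ center G)
    (hNc : ⁅N, N⁆ ≤ center G) : (⊤ : Subgroup G).lowerCentralSeries 3 = ⊥ := by
  have hsup : M ⊔ N = ⊤ := (isCoatom_of_index_prime (hM ▸ hp.out)).sup_eq_top_of_ne
    (isCoatom_of_index_prime (hN ▸ hp.out)) hMN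
  have hγ₂ : (⊤ : Subgroup G).lowerCentralSeries 2 ≤ center G := by
    rw [Subgroup.lowerCentralSeries_succ, top_lowerCentralSeries_one, ← hsup]
    exact commutator_sup_right_le
      ((commutator_mono (hG.commutator_le_of_index_eq_prime hM) le_rfl).trans hMc)
      ((commutator_mono (hG.commutator_le_of_index_eq_prime hN) le_rfl).trans hNc)
  rw [Subgroup.lowerCentralSeries_succ, eq_bot_iff]
  exact (commutator_mono hγ₂ le_top).trans (commutator_center_left ⊤).le

end IsPGroup

/-- If a finite `p`-group `G` is an `A_2`-group, then `d(G) ≤ 3` and the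
nilpotency class of `G` is at most `3`. -/
theorem A2_rank_and_class (p : ℕ) (hp : p.Prime) (G : Type*) [Group G] [Finite G]
    (hG : IsPGroup p G) (hA : IsAtGroup p 2 G) :
    Group.rank G ≤ 3 ∧ (⊤ : Subgroup G).lowerCentralSeries 3 = ⊥ := by
  have := Fact.mk hp
  obtain ⟨hab, M, hM, hMna⟩ := hA
  rw [Nat.add_one_sub_one, pow_one] at hM
  push Not at hMna
  obtain ⟨x, hx, y, hy, hxy⟩ := hMna
  obtain ⟨g, hg⟩ := SetLike.exists_not_mem_of_ne_top M (isCoatom_of_index_prime (hM ▸ hp)).ne_top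
  have hnc : zpowers g ≠ ⊤ := fun h =>
    have := isCyclic_iff_exists_zpowers_eq_top.mpr ⟨g, h⟩
    hxy (mul_comm' x y)
  obtain ⟨N, hgN, hN⟩ := hG.exists_le_index_eq_prime hnc
  refine ⟨?_, hG.lowerCentralSeries_three_eq_bot_s16 hM hN (fun h => hg (h ▸ hgN (mem_zpowers g)))
    (hG.commutator_le_center_of_index_eq_prime hab hM)
    (hG.commutator_le_center_of_index_eq_prime hab hN)⟩
  classical
  refine (Group.rank_le (S := {x, y, g}) ?_).trans Finset.card_le_three
  simpa using hG.closure_triple_eq_top hab hM hx hy hxy hg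
end
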